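/- arXiv:1211.5718 — 7 statements merged into one kernel-verified Lean document; each statement's English description precedes it below -/
import Mathlib

section
/- There exists a universal constant C such that for every integer N ≥ 4 and every real Δ ≥ 0, there is a (Δ, L)-uncertain compression scheme over the universe U = {1,…,N} with performance function L(P) = C·(H(P) + Δ + log₂ log₂ N + 1). That is, there exist functions E : 𝒫(U) × U → {0,1}* and D : 𝒫(U) × {0,1}* → U such that D(Q, E(P,m)) = m for every Δ-close pair P, Q ∈ 𝒫(U) and every m ∈ U, and 𝔼_{m←P}[|E(P,m)|] ≤ C·(H(P) + Δ + log₂ log₂ N + 1) for every P ∈ 𝒫(U). -/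
/-- Finite binary strings `{0,1}*`. -/
abbrev Str := List Bool

/-- A probability distribution on `[N] = Fin N` with full support. -/
def IsDist {N : ℕ} (P : Fin N → ℝ) : Prop :=
  (∀ m, 0 < P m) ∧ ∑ m, P m = 1

/-- The space `𝒫(U)` of full-support probability distributions on `U = Fin N`. -/
def PDist (N : ℕ) : Type := {P : Fin N → ℝ // IsDist P}

/-- `P` and `Q` are `Δ`-close: `|log₂(P(m)/Q(m))| ≤ Δ` for every `m`. -/
def Close {N : ℕ} (Δ : ℝ) (P Q : PDist N) : Prop :=
  ∀ m, |Real.logb 2 (P.1 m / Q.1 m)| ≤ Δ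

/-- The binary entropy `H(P) = Σ_m P(m) log₂(1/P(m))`. -/
noncomputable def entropy {N : ℕ} (P : Fin N → ℝ) : ℝ :=
  ∑ m, P m * Real.logb 2 (1 / P m)

/-- The iterated logarithm `log* N`: the least `i` such that the `i`-fold
iterated base-2 logarithm of `N` is at most `1`. -/
noncomputable def logStar (N : ℕ) : ℕ :=
  sInf {i : ℕ | (Real.logb 2)^[i] (N : ℝ) ≤ 1}

open scoped Classical

namespace UCSAux

def bitsFixed (L n : ℕ) : List Bool := (List.range L).map n.testBit
def fromBits (l : List Bool) : ℕ := l.foldr (fun b r => 2 * r + b.toNat) 0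

@[simp] lemma length_bitsFixed (L n : ℕ) : (bitsFixed L n).length = L := by
  simp [bitsFixed]

lemma fromBits_bitsFixed (L : ℕ) : ∀ n : ℕ, n < 2 ^ L → fromBits (bitsFixed L n) = n := by
  induction L with
  | zero => intro n hn; interval_cases n; rfl
  | succ L ih =>
    intro n hn
    have h1 : bitsFixed (L+1) n = n.testBit 0 :: bitsFixed L (n / 2) := by
      simp [bitsFixed, List.range_succ_eq_map, List.map_map, Function.comp_def,
        Nat.testBit_succ]
    rw [h1]
    have h2 : fromBits (n.testBit 0 :: bitsFixed L (n / 2)) =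
        2 * fromBits (bitsFixed L (n / 2)) + (n.testBit 0).toNat := rfl
    rw [h2, ih (n / 2) (by omega)]
    have : (n.testBit 0).toNat = n % 2 := by
      rcases Nat.mod_two_eq_zero_or_one n with h | h <;>
        simp [Nat.testBit_zero, h]
    omega

lemma takeWhile_replicate (k : ℕ) (rest : List Bool) :
    ((List.replicate k true ++ [false]) ++ rest).takeWhile (fun b => b) =
      List.replicate k true := by
  induction k with
  | zero => simp [List.takeWhile]
  | succ k ih => simpa [List.replicate_succ, List.takeWhile] using ih

lemma centralBinom_le (n : ℕ) (hn : 0 < n) :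
    Nat.centralBinom n ≤ (2*n) ^ (Nat.primesBelow (2*n+1)).card := by
  have h0 : (∏ p ∈ Finset.range (2*n+1), p ^ (Nat.centralBinom n).factorization p)
      = Nat.centralBinom n := Nat.prod_pow_factorization_centralBinom n
  have hsub : ∏ p ∈ Finset.range (2*n+1), p ^ (Nat.centralBinom n).factorization p
      = ∏ p ∈ Nat.primesBelow (2*n+1), p ^ (Nat.centralBinom n).factorization p := by
    rw [eq_comm]
    apply Finset.prod_subset
    · exact Finset.filter_subset _ _
    · intro p hp hnp
      have : ¬ p.Prime := by
        simp only [Nat.primesBelow, Finset.mem_filter] at hnp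
        tauto
      rw [Nat.factorization_eq_zero_of_not_prime _ this, pow_zero]
  have h2 : ∏ p ∈ Nat.primesBelow (2*n+1), p ^ (Nat.centralBinom n).factorization p
      ≤ (2*n) ^ (Nat.primesBelow (2*n+1)).card := by
    rw [← Finset.prod_const]
    apply Finset.prod_le_prod'
    intro p _
    exact Nat.pow_factorization_choose_le (by omega)
  omega

lemma card_primesBelow_gt (K : ℕ) :
    K < (Nat.primesBelow (2 ^ (2 * Nat.log 2 (K+2) + 4) + 1)).card := by
  set L := Nat.log 2 (K+2) with hL
  set j := 2 * L + 4 with hj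
  by_contra hcon
  push_neg at hcon
  set n := 2 ^ (2 * L + 3) with hn
  have h2n : 2 * n = 2 ^ j := by rw [hn, hj]; ring
  set c := (Nat.primesBelow (2 ^ j + 1)).card with hc
  have h1 : 4 ^ n ≤ (2*n+1) * (2*n) ^ c := by
    have h := le_trans (Nat.four_pow_le_two_mul_add_one_mul_central_binom n)
      (Nat.mul_le_mul_left _ (centralBinom_le n (by positivity)))
    rw [h2n] at h
    rw [h2n]
    exact h
  have h2 : (2*n+1) * (2*n) ^ c ≤ 2 ^ (j+1) * 2 ^ (j * K) := by
    apply Nat.mul_le_mul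
    · rw [h2n]
      have : 1 ≤ 2 ^ j := Nat.one_le_two_pow
      omega
    · rw [h2n, ← pow_mul]
      exact Nat.pow_le_pow_right (by positivity) (Nat.mul_le_mul_left j hcon)
  have h3 : 2 ^ (2*n) ≤ 2 ^ (j + 1 + j * K) := by
    calc 2 ^ (2*n) = 4 ^ n := by rw [pow_mul]; norm_num
      _ ≤ 2 ^ (j+1) * 2 ^ (j * K) := le_trans h1 h2
      _ = 2 ^ (j + 1 + j * K) := by rw [← pow_add]
  have h4 : 2 * n ≤ j + 1 + j * K :=
    (Nat.pow_le_pow_iff_right (by norm_num)).mp h3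
  rw [h2n] at h4
  have hKt : K + 2 < 2 * 2 ^ L := by
    have := Nat.lt_pow_succ_log_self (by norm_num : 1 < 2) (K+2)
    rw [← hL] at this
    omega
  have hLt : L ≤ 2 ^ L := Nat.le_of_lt (Nat.lt_two_pow_self (n := L))
  have hexp : 2 ^ j = 16 * 2 ^ L * 2 ^ L := by
    rw [hj]; ring
  have hbig : j + 1 + j * K < 2 ^ j := by
    rw [hexp]
    nlinarith [Nat.one_le_two_pow (n := L)]
  omega

lemma exists_prime_notin (K : ℕ) (B : Finset ℕ) (hB : B.card ≤ K) :
    ∃ p : ℕ, p.Prime ∧ p ≤ 2 ^ (2 * Nat.log 2 (K+2) + 4) ∧ p ∉ B := by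
  set X := Nat.primesBelow (2 ^ (2 * Nat.log 2 (K+2) + 4) + 1) with hX
  have hcard : B.card < X.card := lt_of_le_of_lt hB (card_primesBelow_gt K)
  have hne : (X \ B).Nonempty := by
    rw [← Finset.card_pos]
    have h1 := Finset.card_le_card (Finset.inter_subset_right (s₁ := X) (s₂ := B))
    have hsplit := Finset.card_sdiff_add_card_inter X B
    omega
  obtain ⟨p, hp⟩ := hne
  rw [Finset.mem_sdiff] at hp
  refine ⟨p, Nat.prime_of_mem_primesBelow hp.1, ?_, hp.2⟩
  have := Nat.lt_of_mem_primesBelow hp.1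
  omega

lemma card_primeFactors_le (d : ℕ) (hd : d ≠ 0) : d.primeFactors.card ≤ Nat.log 2 d := by
  have h1 : 2 ^ d.primeFactors.card ≤ ∏ p ∈ d.primeFactors, p := by
    apply Finset.pow_card_le_prod
    intro p hp
    exact (Nat.prime_of_mem_primeFactors hp).two_le
  have h2 : ∏ p ∈ d.primeFactors, p ≤ d :=
    Nat.le_of_dvd (Nat.pos_of_ne_zero hd) (Nat.prod_primeFactors_dvd d)
  exact (Nat.le_log_iff_pow_le (by norm_num) hd).mpr (le_trans h1 h2)

end UCSAux

open UCSAux in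
/-- There is a universal constant `C` such that for every
`N ≥ 4` and every `Δ ≥ 0` there is a `(Δ, L)`-uncertain compression scheme
over `U = Fin N` with `L(P) = C·(H(P) + Δ + log₂ log₂ N + 1)`: functions
`E : 𝒫(U) × U → {0,1}*` and `D : 𝒫(U) × {0,1}* → U` with `D(Q, E(P,m)) = m`
for every `Δ`-close pair `P, Q` and every `m`, and expected encoding length
`𝔼_{m←P}[|E(P,m)|] ≤ C·(H(P) + Δ + log₂ log₂ N + 1)` for every `P`. -/
theorem exists_deterministic_UCS :
    ∃ C : ℝ, 0 < C ∧ ∀ N : ℕ, 4 ≤ N → ∀ Δ : ℝ, 0 ≤ Δ →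
      ∃ (E : PDist N → Fin N → Str) (D : PDist N → Str → Fin N),
        (∀ P Q : PDist N, Close Δ P Q → ∀ m : Fin N, D Q (E P m) = m) ∧
        (∀ P : PDist N, ∑ m, P.1 m * ((E P m).length : ℝ) ≤
          C * (entropy P.1 + Δ + Real.logb 2 (Real.logb 2 N) + 1)) := by
  refine ⟨40, by norm_num, ?_⟩
  intro N hN Δ hΔ
  -- basic facts about distributions
  have hle1 : ∀ (P : PDist N) (m : Fin N), P.1 m ≤ 1 := by
    intro P m
    calc P.1 m ≤ ∑ m', P.1 m' :=
          Finset.single_le_sum (fun i _ => (P.2.1 i).le) (Finset.mem_univ m)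
      _ = 1 := P.2.2
  have hlogpos : ∀ (P : PDist N) (m : Fin N), 0 ≤ Real.logb 2 (1 / P.1 m) := by
    intro P m
    apply Real.logb_nonneg (by norm_num)
    rw [le_one_div (by norm_num) (P.2.1 m)]
    simpa using hle1 P m
  -- the parameters
  set dd : ℕ := ⌈2*Δ⌉₊ + 1 with hdd
  set KK : ℕ → ℕ := fun k => 2 ^ (k + dd) * Nat.log 2 N with hKK
  set jj : ℕ → ℕ := fun k => 2 * Nat.log 2 (KK k + 2) + 4 with hjj
  set kk : PDist N → Fin N → ℕ := fun P m => ⌈Real.logb 2 (1 / P.1 m)⌉₊ with hkk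
  set SS : PDist N → Fin N → Finset (Fin N) := fun P m =>
    Finset.univ.filter (fun m' =>
      m' ≠ m ∧ Real.logb 2 (1 / P.1 m') ≤ (kk P m : ℝ) + 2*Δ + 1) with hSS
  -- the dangerous set is small
  have hcardS : ∀ (P : PDist N) (m : Fin N), ((SS P m).card : ℝ) ≤ 2 ^ (kk P m + dd) := by
    intro P m
    have key : ∀ m' ∈ SS P m, (1:ℝ)/2 ^ (kk P m + dd) ≤ P.1 m' := by
      intro m' hm'
      rw [hSS, Finset.mem_filter] at hm'
      have h1 : Real.logb 2 (1 / P.1 m') ≤ ((kk P m + dd : ℕ) : ℝ) := by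
        have h2 : 2*Δ ≤ (⌈2*Δ⌉₊ : ℝ) := Nat.le_ceil _
        push_cast
        linarith [hm'.2.2, (by simp [hdd] : (dd:ℝ) = ⌈2*Δ⌉₊ + 1)]
      have h3 : 1 / P.1 m' ≤ (2:ℝ) ^ ((kk P m + dd : ℕ) : ℝ) :=
        (Real.logb_le_iff_le_rpow (by norm_num) (one_div_pos.mpr (P.2.1 m'))).mp h1
      rw [Real.rpow_natCast] at h3
      exact (one_div_le (P.2.1 m') (by positivity)).mp h3
    have hsum1 : ∑ m' ∈ SS P m, P.1 m' ≤ 1 := by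
      rw [← P.2.2]
      exact Finset.sum_le_sum_of_subset_of_nonneg (Finset.subset_univ _)
        (fun i _ _ => (P.2.1 i).le)
    have hsmul := Finset.card_nsmul_le_sum (SS P m) (fun m' => P.1 m')
      ((1:ℝ)/2 ^ (kk P m + dd)) key
    rw [nsmul_eq_mul] at hsmul
    have hT : (0:ℝ) < 2 ^ (kk P m + dd) := by positivity
    have hinv : (1 / (2:ℝ) ^ (kk P m + dd)) * 2 ^ (kk P m + dd) = 1 := by field_simp
    nlinarith [hsmul, hsum1, hT, hinv]
  -- existence of a good prime
  have hpex : ∀ (P : PDist N) (m : Fin N), ∃ p : ℕ, p.Prime ∧ p ≤ 2 ^ (jj (kk P m)) ∧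
      ∀ m' ∈ SS P m, m'.1 % p ≠ m.1 % p := by
    intro P m
    set B : Finset ℕ := (SS P m).biUnion
      (fun m' => ((m.1 : ℤ) - (m'.1 : ℤ)).natAbs.primeFactors) with hB
    have hdne : ∀ m' ∈ SS P m, ((m.1 : ℤ) - (m'.1 : ℤ)).natAbs ≠ 0 := by
      intro m' hm'
      rw [hSS, Finset.mem_filter] at hm'
      have := Fin.val_ne_of_ne hm'.2.1
      omega
    have hcardB : B.card ≤ KK (kk P m) := by
      calc B.card ≤ ∑ m' ∈ SS P m, ((m.1 : ℤ) - (m'.1 : ℤ)).natAbs.primeFactors.card :=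
            Finset.card_biUnion_le
        _ ≤ ∑ _m' ∈ SS P m, Nat.log 2 N := by
            apply Finset.sum_le_sum
            intro m' hm'
            refine le_trans (card_primeFactors_le _ (hdne m' hm')) ?_
            apply Nat.log_mono_right
            have h1 : (m.1 : ℤ) < N := by exact_mod_cast m.2
            have h2 : (m'.1 : ℤ) < N := by exact_mod_cast m'.2
            omega
        _ = (SS P m).card * Nat.log 2 N := by rw [Finset.sum_const, smul_eq_mul]
        _ ≤ 2 ^ (kk P m + dd) * Nat.log 2 N := by
            apply Nat.mul_le_mul_right
            exact_mod_cast hcardS P m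
        _ = KK (kk P m) := rfl
    obtain ⟨p, hp, hple, hpB⟩ := exists_prime_notin (KK (kk P m)) B hcardB
    refine ⟨p, hp, hple, ?_⟩
    intro m' hm' heq
    apply hpB
    rw [hB, Finset.mem_biUnion]
    refine ⟨m', hm', ?_⟩
    rw [Nat.mem_primeFactors]
    refine ⟨hp, ?_, hdne m' hm'⟩
    have hmeq : m'.1 ≡ m.1 [MOD p] := heq
    have hdvd := (Nat.modEq_iff_dvd).mp hmeq
    have h2 := Int.natAbs_dvd_natAbs.mpr hdvd
    simpa using h2
  -- the encoder
  set pp : PDist N → Fin N → ℕ := fun P m => (hpex P m).choose with hpp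
  set E : PDist N → Fin N → Str := fun P m =>
    (List.replicate (kk P m) true ++ [false]) ++
      (bitsFixed (jj (kk P m)) (pp P m) ++
       bitsFixed (jj (kk P m)) (m.1 % pp P m)) with hE
  -- the decoder
  set D : PDist N → Str → Fin N := fun Q s =>
    let k := (s.takeWhile (fun b => b)).length
    let rest := s.drop (k+1)
    let p := fromBits (rest.take (jj k))
    let r := fromBits (rest.drop (jj k))
    let cand := Finset.univ.filter (fun m' : Fin N =>
      |Real.logb 2 (1 / Q.1 m') - (k : ℝ)| ≤ Δ + 1 ∧ m'.1 % p = r)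
    if h : cand.Nonempty then cand.min' h else ⟨0, by omega⟩ with hD
  refine ⟨E, D, ?_, ?_⟩
  · -- correctness
    intro P Q hclose m
    have hspec : Nat.Prime (pp P m) ∧ pp P m ≤ 2 ^ (jj (kk P m)) ∧
        ∀ m' ∈ SS P m, m'.1 % pp P m ≠ m.1 % pp P m := (hpex P m).choose_spec
    obtain ⟨hp, hple, hpsep⟩ := hspec
    have hplt : pp P m < 2 ^ (jj (kk P m)) := by
      rcases lt_or_eq_of_le hple with h | h
      · exact h
      · exfalso
        have h2 : (2:ℕ) ∣ pp P m := by
          rw [h]; exact dvd_pow_self 2 (by simp [hjj])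
        have := (Nat.Prime.eq_one_or_self_of_dvd hp 2 h2)
        have h16 : (16:ℕ) ≤ 2 ^ (jj (kk P m)) := by
          calc (16:ℕ) = 2^4 := by norm_num
            _ ≤ 2 ^ (jj (kk P m)) := Nat.pow_le_pow_right (by norm_num) (by simp [hjj])
        omega
    -- parsing
    have hparse_k : ((E P m).takeWhile (fun b => b)).length = kk P m := by
      rw [hE]
      simp only
      rw [takeWhile_replicate]
      simp
    have hparse_rest : (E P m).drop (kk P m + 1) =
        bitsFixed (jj (kk P m)) (pp P m) ++ bitsFixed (jj (kk P m)) (m.1 % pp P m) := by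
      rw [hE]
      simp only
      have hlen : kk P m + 1 = (List.replicate (kk P m) true ++ [false]).length := by simp
      rw [hlen, List.drop_left]
    have hparse_p : fromBits ((bitsFixed (jj (kk P m)) (pp P m) ++
        bitsFixed (jj (kk P m)) (m.1 % pp P m)).take (jj (kk P m))) = pp P m := by
      rw [List.take_left' (length_bitsFixed _ _)]
      exact fromBits_bitsFixed _ _ hplt
    have hparse_r : fromBits ((bitsFixed (jj (kk P m)) (pp P m) ++
        bitsFixed (jj (kk P m)) (m.1 % pp P m)).drop (jj (kk P m))) = m.1 % pp P m := by
      rw [List.drop_left' (length_bitsFixed _ _)]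
      refine fromBits_bitsFixed _ _ ?_
      calc m.1 % pp P m < pp P m := Nat.mod_lt _ hp.pos
        _ < 2 ^ (jj (kk P m)) := hplt
    -- Δ-closeness in terms of logb (1/·)
    have hQP : ∀ m' : Fin N,
        |Real.logb 2 (1 / Q.1 m') - Real.logb 2 (1 / P.1 m')| ≤ Δ := by
      intro m'
      have h1 : Real.logb 2 (1 / Q.1 m') - Real.logb 2 (1 / P.1 m')
          = Real.logb 2 (P.1 m' / Q.1 m') := by
        rw [one_div, one_div, Real.logb_inv, Real.logb_inv,
          Real.logb_div (P.2.1 m').ne' (Q.2.1 m').ne']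
        ring
      rw [h1]
      exact hclose m'
    have hkreal1 : Real.logb 2 (1 / P.1 m) ≤ (kk P m : ℝ) := Nat.le_ceil _
    have hkreal2 : (kk P m : ℝ) ≤ Real.logb 2 (1 / P.1 m) + 1 :=
      (Nat.ceil_lt_add_one (hlogpos P m)).le
    -- the candidate set is {m}
    rw [hD]
    simp only
    rw [hparse_k, hparse_rest, hparse_p, hparse_r]
    have hcand : (Finset.univ.filter (fun m' : Fin N =>
        |Real.logb 2 (1 / Q.1 m') - (kk P m : ℝ)| ≤ Δ + 1 ∧
          m'.1 % pp P m = m.1 % pp P m)) = {m} := by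
      apply Finset.ext
      intro x
      rw [Finset.mem_filter, Finset.mem_singleton]
      constructor
      · rintro ⟨-, hlev, hres⟩
        by_contra hne
        have hxS : x ∈ SS P m := by
          rw [hSS, Finset.mem_filter]
          refine ⟨Finset.mem_univ _, hne, ?_⟩
          have := hQP x
          have h := abs_le.mp hlev
          have h2 := abs_le.mp this
          linarith
        exact hpsep x hxS hres
      · rintro rfl
        refine ⟨Finset.mem_univ _, ?_, rfl⟩
        have h1 := hQP x
        have h2 := abs_le.mp h1
        rw [abs_le]
        constructor <;> linarith
    rw [hcand]
    rw [dif_pos ⟨m, Finset.mem_singleton_self m⟩]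
    exact Finset.min'_singleton m
  · -- performance
    intro P
    set LL : ℝ := Real.logb 2 (Real.logb 2 N) with hLL
    have hlogN : (2:ℝ) ≤ Real.logb 2 N := by
      calc (2:ℝ) = Real.logb 2 (2^2) := by
            rw [Real.logb_pow]; simp [Real.logb_self_eq_one]
        _ ≤ Real.logb 2 N := by
            apply Real.logb_le_logb_of_le (by norm_num) (by norm_num)
            exact_mod_cast hN
    have hLL1 : 1 ≤ LL := by
      rw [hLL]
      calc (1:ℝ) = Real.logb 2 2 := (Real.logb_self_eq_one (by norm_num)).symm
      _ ≤ Real.logb 2 (Real.logb 2 N) :=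
        Real.logb_le_logb_of_le (by norm_num) (by norm_num) hlogN
    have hNlog2 : 2 ≤ Nat.log 2 N := by
      calc 2 = Nat.log 2 4 := by rw [show (4:ℕ) = 2^2 by norm_num, Nat.log_pow (by norm_num)]
        _ ≤ Nat.log 2 N := Nat.log_mono_right hN
    -- bound jj in terms of k
    have hNlogpos : (0:ℝ) < (Nat.log 2 N : ℝ) := by exact_mod_cast lt_of_lt_of_le (by norm_num) hNlog2
    have hjjb : ∀ k : ℕ, (jj k : ℝ) ≤ 2*(k:ℝ) + 2*(dd:ℝ) + 2*LL + 8 := by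
      intro k
      have h0 : 1 ≤ KK k := by
        rw [hKK]
        simp only
        have h00 : 1 ≤ 2 ^ (k + dd) := Nat.one_le_two_pow
        nlinarith [hNlog2]
      have h0r : (1:ℝ) ≤ (KK k : ℝ) := by exact_mod_cast h0
      have h1 : (Nat.log 2 (KK k + 2) : ℝ) ≤ Real.logb 2 ((KK k : ℝ) + 2) := by
        have h := Real.natLog_le_logb (KK k + 2) 2
        push_cast at h
        exact h
      have h2 : Real.logb 2 ((KK k : ℝ) + 2) ≤ Real.logb 2 (4 * (KK k : ℝ)) := by
        apply Real.logb_le_logb_of_le (by norm_num) (by positivity)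
        linarith
      have h3 : Real.logb 2 (4 * (KK k : ℝ)) ≤ 2 + ((k:ℝ) + (dd:ℝ)) + LL := by
        have e1 : (4 * (KK k : ℝ)) = (2:ℝ)^(k+dd+2) * (Nat.log 2 N : ℝ) := by
          rw [hKK]
          push_cast
          ring
        rw [e1, Real.logb_mul (by positivity) hNlogpos.ne', Real.logb_pow,
          Real.logb_self_eq_one (by norm_num)]
        have h4 : Real.logb 2 ((Nat.log 2 N : ℝ)) ≤ LL := by
          rw [hLL]
          apply Real.logb_le_logb_of_le (by norm_num) hNlogpos
          calc (Nat.log 2 N : ℝ) ≤ Real.logb 2 N := by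
                have := Real.natLog_le_logb N 2
                exact_mod_cast this
            _ = Real.logb 2 (N:ℝ) := rfl
        push_cast
        linarith
      have hjr : (jj k : ℝ) = 2 * (Nat.log 2 (KK k + 2) : ℝ) + 4 := by
        rw [hjj]
        push_cast
        ring
      rw [hjr]
      linarith
    -- per-message length bound
    have hlen : ∀ m : Fin N, ((E P m).length : ℝ) ≤
        5 * Real.logb 2 (1 / P.1 m) + (8*Δ + 4*LL + 30) := by
      intro m
      have hlen0 : (E P m).length = kk P m + 1 + (jj (kk P m) + jj (kk P m)) := by
        rw [hE]
        simp
        omega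
      have hk2 : (kk P m : ℝ) ≤ Real.logb 2 (1 / P.1 m) + 1 :=
        (Nat.ceil_lt_add_one (hlogpos P m)).le
      have hddr : (⌈2*Δ⌉₊ : ℝ) ≤ 2*Δ + 1 :=
        (Nat.ceil_lt_add_one (by positivity : (0:ℝ) ≤ 2*Δ)).le
      have hjb := hjjb (kk P m)
      rw [hlen0]
      push_cast
      push_cast at hjb
      linarith [(by simp [hdd] : (dd:ℝ) = ⌈2*Δ⌉₊ + 1)]
    have hHpos : 0 ≤ entropy P.1 :=
      Finset.sum_nonneg (fun i _ => mul_nonneg (P.2.1 i).le (hlogpos P i))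
    calc ∑ m, P.1 m * ((E P m).length : ℝ)
        ≤ ∑ m, P.1 m * (5 * Real.logb 2 (1 / P.1 m) + (8*Δ + 4*LL + 30)) := by
          apply Finset.sum_le_sum
          intro i _
          exact mul_le_mul_of_nonneg_left (hlen i) (P.2.1 i).le
      _ = 5 * entropy P.1 + (8*Δ + 4*LL + 30) := by
          have hc : ∀ i ∈ Finset.univ, P.1 i * (5 * Real.logb 2 (1 / P.1 i) + (8*Δ + 4*LL + 30))
              = 5 * (P.1 i * Real.logb 2 (1 / P.1 i)) + (8*Δ + 4*LL + 30) * P.1 i :=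
            fun i _ => by ring
          rw [Finset.sum_congr rfl hc, Finset.sum_add_distrib, ← Finset.mul_sum,
            ← Finset.mul_sum, P.2.2, mul_one, entropy]
      _ ≤ 40 * (entropy P.1 + Δ + LL + 1) := by nlinarith [hΔ, hLL1, hHpos]
end

section
/- For all integers N, ℓ ≥ 1 and 1 ≤ k ≤ k' ≤ N, the chromatic numbers of the restricted uncertainty graphs satisfy χ(𝒰_{N,ℓ,k'}) ≤ χ(𝒰_{N,ℓ,k}). -/
/-- δ(π,σ) for permutations of `Fin N`. -/
def permDelta {N : ℕ} (π σ : Equiv.Perm (Fin N)) : ℕ :=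
  Finset.univ.sup fun i => Nat.dist (π.symm i) (σ.symm i)

/-- A permutation `π'` of `[N]` extends the `k`-subpermutation `π` if they
agree on the first `k` coordinates. -/
def ExtendsP {N k : ℕ} (π' : Equiv.Perm (Fin N)) (π : Fin k ↪ Fin N) : Prop :=
  ∀ i : Fin k, ∀ h : (i : ℕ) < N, π' ⟨i, h⟩ = π i

/-- δ(π,σ) for `k`-subpermutations: minimum of `permDelta` over extensions. -/
noncomputable def subDelta {N k : ℕ} (π σ : Fin k ↪ Fin N) : ℕ :=
  sInf {d : ℕ | ∃ π' σ' : Equiv.Perm (Fin N),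
    ExtendsP π' π ∧ ExtendsP σ' σ ∧ permDelta π' σ' = d}

lemma permDelta_comm {N : ℕ} (π σ : Equiv.Perm (Fin N)) :
    permDelta π σ = permDelta σ π := by
  simp [permDelta, Nat.dist_comm]

lemma subDelta_comm {N k : ℕ} (π σ : Fin k ↪ Fin N) :
    subDelta π σ = subDelta σ π := by
  unfold subDelta
  congr 1
  ext d
  constructor <;> rintro ⟨a, b, h1, h2, h3⟩ <;>
    exact ⟨b, a, h2, h1, by rw [← h3, permDelta_comm]⟩

/-- The `k`-restricted uncertainty graph `𝒰_{N,ℓ,k}` on vertex set `S_{N,k}`,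
the set of `k`-subpermutations of `[N]`.  For `k = N` this is the
(unrestricted) uncertainty graph `𝒰_{N,ℓ}`. -/
noncomputable def uncGraph (N ℓ k : ℕ) : SimpleGraph (Fin k ↪ Fin N) where
  Adj π σ := (∃ h : 0 < k, π ⟨0, h⟩ ≠ σ ⟨0, h⟩) ∧ subDelta π σ ≤ ℓ
  symm := by
    refine ⟨?_⟩
    rintro π σ ⟨⟨h, hne⟩, hd⟩
    exact ⟨⟨h, hne.symm⟩, by rwa [subDelta_comm]⟩
  loopless := ⟨by rintro π ⟨⟨h, hne⟩, -⟩; exact hne rfl⟩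




open Classical in
lemma exists_extendsP {N k : ℕ} (hkN : k ≤ N) (π : Fin k ↪ Fin N) :
    ∃ π' : Equiv.Perm (Fin N), ExtendsP π' π := by
  classical
  set g : Fin k ↪ Fin N := Fin.castLEEmb hkN with hg
  let e : {x : Fin N // x ∈ Set.range g} ≃ {x : Fin N // x ∈ Set.range π} :=
    (Equiv.ofInjective g g.injective).symm.trans (Equiv.ofInjective π π.injective)
  refine ⟨e.extendSubtype, ?_⟩
  intro i hi
  have hx : (⟨(i : ℕ), hi⟩ : Fin N) ∈ Set.range g := ⟨i, rfl⟩
  have h1 : e.extendSubtype ⟨(i : ℕ), hi⟩ = e ⟨⟨(i : ℕ), hi⟩, hx⟩ :=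
    Equiv.extendSubtype_apply_of_mem e _ hx
  rw [h1]
  have h2 : (⟨(⟨(i : ℕ), hi⟩ : Fin N), hx⟩ : {x : Fin N // x ∈ Set.range g})
      = Equiv.ofInjective g g.injective i := by
    apply Subtype.ext
    simp [hg, Fin.castLEEmb, Fin.castLE, Equiv.ofInjective]
  simp only [e, Equiv.trans_apply, h2, Equiv.symm_apply_apply, Equiv.ofInjective_apply,
    Equiv.ofInjective_symm_apply]

lemma extendsP_restrict {N k k' : ℕ} (hkk' : k ≤ k') {π' : Equiv.Perm (Fin N)}
    {π : Fin k' ↪ Fin N} (h : ExtendsP π' π) :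
    ExtendsP π' ((Fin.castLEEmb hkk').trans π) := by
  intro i hi
  have := h (Fin.castLE hkk' i) hi
  simpa using this

lemma subDelta_restrict_le {N k k' : ℕ} (hkk' : k ≤ k') (hk'N : k' ≤ N)
    (π σ : Fin k' ↪ Fin N) :
    subDelta ((Fin.castLEEmb hkk').trans π) ((Fin.castLEEmb hkk').trans σ)
      ≤ subDelta π σ := by
  obtain ⟨π', hπ'⟩ := exists_extendsP hk'N π
  obtain ⟨σ', hσ'⟩ := exists_extendsP hk'N σ
  have hne : {d : ℕ | ∃ a b : Equiv.Perm (Fin N),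
      ExtendsP a π ∧ ExtendsP b σ ∧ permDelta a b = d}.Nonempty :=
    ⟨permDelta π' σ', π', σ', hπ', hσ', rfl⟩
  have hmem := Nat.sInf_mem hne
  obtain ⟨a, b, ha, hb, hab⟩ := hmem
  exact Nat.sInf_le ⟨a, b, extendsP_restrict hkk' ha, extendsP_restrict hkk' hb, hab⟩

/-- For all integers `N, ℓ ≥ 1` and `1 ≤ k ≤ k' ≤ N`, the
chromatic numbers of the restricted uncertainty graphs satisfy
`χ(𝒰_{N,ℓ,k'}) ≤ χ(𝒰_{N,ℓ,k})`. -/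
theorem chromaticNumber_uncGraph_anti (N ℓ k k' : ℕ)
    (hN : 1 ≤ N) (hℓ : 1 ≤ ℓ) (hk : 1 ≤ k) (hkk' : k ≤ k') (hk'N : k' ≤ N) :
    (uncGraph N ℓ k').chromaticNumber ≤ (uncGraph N ℓ k).chromaticNumber := by
  have hhom : uncGraph N ℓ k' →g uncGraph N ℓ k := by
    refine ⟨fun π => (Fin.castLEEmb hkk').trans π, ?_⟩
    rintro π σ ⟨⟨h0, hne⟩, hd⟩
    refine ⟨⟨hk, ?_⟩, le_trans (subDelta_restrict_le hkk' hk'N π σ) hd⟩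
    simpa [Fin.castLE] using hne
  apply SimpleGraph.chromaticNumber_le_of_forall_imp
  intro n ⟨C⟩
  exact ⟨C.comp hhom⟩
end

section
/- For every finite simple graph G with at least 3 vertices, the chromatic number satisfies χ(G) ≤ χ_f(G) · ln |V(G)|, where χ_f(G) is the fractional chromatic number and ln denotes the natural logarithm. -/
/-- `s` is an independent set of the simple graph `G`. -/
def IsIndepSet {V : Type*} (G : SimpleGraph V) (s : Set V) : Prop :=
  ∀ u ∈ s, ∀ v ∈ s, ¬ G.Adj u v

/-- The fractional chromatic number of a finite simple graph `G`: the least `w`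
such that there exist independent sets `I₁,…,I_t` and nonnegative weights
`w₁,…,w_t` with `Σ_j w_j = w` and `Σ_{j : I_j ∋ u} w_j ≥ 1` for every
vertex `u`. -/
noncomputable def fracChromaticNumber {V : Type*} [Fintype V]
    (G : SimpleGraph V) : ℝ :=
  sInf {w : ℝ | ∃ (t : ℕ) (I : Fin t → Set V) (ws : Fin t → ℝ),
    (∀ j, 0 ≤ ws j) ∧ (∀ j, IsIndepSet G (I j)) ∧ (∑ j, ws j = w) ∧
    ∀ u : V, 1 ≤ ∑ j, (I j).indicator (fun _ => ws j) u}

open Finset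
open scoped Classical

lemma mul_bd {a b w l : ℝ} (hw : a ≤ w) (hl : b ≤ l) (ha : 0 ≤ a) (hb : 0 ≤ b) :
    a * b ≤ w * l := mul_le_mul hw hl hb (ha.trans hw)

/-- A partial proper coloring of `S` with colors `< k`. -/
def GoodCol {V : Type*} (G : SimpleGraph V) (S : Finset V) (k : ℕ) : Prop :=
  ∃ C : V → ℕ, (∀ v ∈ S, C v < k) ∧ ∀ u ∈ S, ∀ v ∈ S, G.Adj u v → C u ≠ C v

lemma goodCol_mono {V : Type*} {G : SimpleGraph V} {S : Finset V} {k k' : ℕ}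
    (h : k ≤ k') (hg : GoodCol G S k) : GoodCol G S k' := by
  obtain ⟨C, h1, h2⟩ := hg
  exact ⟨C, fun v hv => lt_of_lt_of_le (h1 v hv) h, h2⟩

lemma goodCol_card {V : Type*} (G : SimpleGraph V) (S : Finset V) :
    GoodCol G S S.card := by
  classical
  refine ⟨fun v => if h : v ∈ S then (S.equivFin ⟨v, h⟩ : ℕ) else 0, ?_, ?_⟩
  · intro v hv; dsimp only; rw [dif_pos hv]; exact (S.equivFin ⟨v, hv⟩).isLt
  · intro u hu v hv hadj
    dsimp only
    rw [dif_pos hu, dif_pos hv]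
    intro h
    have h2 : S.equivFin ⟨u, hu⟩ = S.equivFin ⟨v, hv⟩ := Fin.val_injective h
    have h3 : (⟨u, hu⟩ : {x // x ∈ S}) = ⟨v, hv⟩ := S.equivFin.injective h2
    exact G.ne_of_adj hadj (by simpa using h3)

/-- triangle-free graphs on at most 4 vertices are 2-colorable -/
lemma goodCol_small {V : Type*} [Fintype V] (G : SimpleGraph V) (S : Finset V)
    (h4 : S.card ≤ 4)
    (htf : ¬ ∃ a ∈ S, ∃ b ∈ S, ∃ c ∈ S, G.Adj a b ∧ G.Adj b c ∧ G.Adj a c) :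
    GoodCol G S 2 := by
  classical
  by_cases hdeg : ∃ a ∈ S, ∃ b ∈ S, ∃ c ∈ S, b ≠ c ∧ G.Adj a b ∧ G.Adj a c
  · obtain ⟨a, ha, b, hb, c, hc, hbc, hab, hac⟩ := hdeg
    refine ⟨fun v => if G.Adj a v then 1 else 0, ?_, ?_⟩
    · intro v _; dsimp only; split_ifs <;> omega
    · intro u hu v hv huv
      dsimp only
      by_cases h1 : G.Adj a u <;> by_cases h2 : G.Adj a v
      · exact absurd ⟨a, ha, u, hu, v, hv, h1, huv, h2⟩ htf
      · simp [h1, h2]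
      · simp [h1, h2]
      · -- u, v not adjacent to a, adjacent to each other: 5 distinct vertices
        exfalso
        have hua : u ≠ a := by rintro rfl; exact h2 huv
        have hva : v ≠ a := by rintro rfl; exact h1 (G.adj_symm huv)
        have hub : u ≠ b := by rintro rfl; exact h1 hab
        have huc : u ≠ c := by rintro rfl; exact h1 hac
        have hvb : v ≠ b := by rintro rfl; exact h2 hab
        have hvc : v ≠ c := by rintro rfl; exact h2 hac
        have huv' : u ≠ v := G.ne_of_adj huv
        have hab' : a ≠ b := G.ne_of_adj hab
        have hac' : a ≠ c := G.ne_of_adj hac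
        have hsub : ({a, b, c, u, v} : Finset V) ⊆ S := by
          intro x hx
          simp only [mem_insert, mem_singleton] at hx
          rcases hx with rfl | rfl | rfl | rfl | rfl <;> assumption
        have hcard : ({a, b, c, u, v} : Finset V).card = 5 := by
          rw [card_insert_of_notMem (by simp [hab', hac', hua.symm, hva.symm]),
            card_insert_of_notMem (by simp [hbc, hub.symm, hvb.symm]),
            card_insert_of_notMem (by simp [huc.symm, hvc.symm]),
            card_insert_of_notMem (by simp [huv']), card_singleton]
        have := card_le_card hsub
        omega
  · -- max degree ≤ 1
    push_neg at hdeg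
    have huniq : ∀ a ∈ S, ∀ b ∈ S, ∀ c ∈ S, G.Adj a b → G.Adj a c → b = c := by
      intro a ha b hb c hc hb' hc'
      by_contra hne
      exact (hdeg a ha b hb c hc hne hb') hc'
    set idx : V → ℕ := fun v => ((Fintype.equivFin V) v : ℕ) with hidx
    have hinj : Function.Injective idx :=
      Fin.val_injective.comp (Fintype.equivFin V).injective
    refine ⟨fun v => if ∃ y ∈ S, G.Adj v y ∧ idx y < idx v then 1 else 0, ?_, ?_⟩
    · intro v _; dsimp only; split_ifs <;> omega
    · intro u hu v hv huv heq
      dsimp only at heq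
      have key : ∀ x ∈ S, ∀ y ∈ S, G.Adj x y → idx y < idx x →
          (if ∃ z ∈ S, G.Adj x z ∧ idx z < idx x then 1 else 0 : ℕ) = 1 ∧
          (if ∃ z ∈ S, G.Adj y z ∧ idx z < idx y then 1 else 0 : ℕ) = 0 := by
        intro x hx y hy hxy hlt
        constructor
        · exact if_pos ⟨y, hy, hxy, hlt⟩
        · rw [if_neg]
          rintro ⟨z, hz, hyz, hzlt⟩
          have : z = x := huniq y hy z hz x hx hyz (G.adj_symm hxy)
          subst this
          omega
      rcases lt_trichotomy (idx u) (idx v) with h | h | h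
      · obtain ⟨k1, k2⟩ := key v hv u hu (G.adj_symm huv) h
        rw [k1, k2] at heq; exact absurd heq.symm one_ne_zero
      · exact G.ne_of_adj huv (hinj h)
      · obtain ⟨k1, k2⟩ := key u hu v hv huv h
        rw [k1, k2] at heq; exact absurd heq one_ne_zero

section Frac

variable {V : Type*} [Fintype V] (G : SimpleGraph V) {t : ℕ}
  (I : Fin t → Set V) (ws : Fin t → ℝ)

lemma ind_le (h0 : ∀ j, 0 ≤ ws j) (j : Fin t) (u : V) :
    (I j).indicator (fun _ => ws j) u ≤ ws j :=
  Set.indicator_apply_le' (fun _ => le_refl _) (fun _ => h0 j)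

lemma w_ge_one (h0 : ∀ j, 0 ≤ ws j)
    (hcov : ∀ u : V, 1 ≤ ∑ j, (I j).indicator (fun _ => ws j) u) (u : V) :
    1 ≤ ∑ j, ws j :=
  le_trans (hcov u) (Finset.sum_le_sum fun j _ => ind_le I ws h0 j u)

lemma w_ge_two (h0 : ∀ j, 0 ≤ ws j) (h1 : ∀ j, IsIndepSet G (I j))
    (hcov : ∀ u : V, 1 ≤ ∑ j, (I j).indicator (fun _ => ws j) u)
    {u v : V} (huv : G.Adj u v) : 2 ≤ ∑ j, ws j := by
  classical
  have key : ∀ j : Fin t, (I j).indicator (fun _ => ws j) u +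
      (I j).indicator (fun _ => ws j) v ≤ ws j := by
    intro j
    by_cases hu : u ∈ I j
    · have hv : v ∉ I j := fun hv => h1 j u hu v hv huv
      simp [Set.indicator_of_mem hu, Set.indicator_of_notMem hv]
    · simp only [Set.indicator_of_notMem hu, zero_add]
      exact ind_le I ws h0 j v
  have h2 : (2:ℝ) ≤ ∑ j, ((I j).indicator (fun _ => ws j) u +
      (I j).indicator (fun _ => ws j) v) := by
    rw [Finset.sum_add_distrib]
    linarith [hcov u, hcov v]
  exact h2.trans (Finset.sum_le_sum fun j _ => key j)

lemma w_ge_three (h0 : ∀ j, 0 ≤ ws j) (h1 : ∀ j, IsIndepSet G (I j))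
    (hcov : ∀ u : V, 1 ≤ ∑ j, (I j).indicator (fun _ => ws j) u)
    {a b c : V} (hab : G.Adj a b) (hbc : G.Adj b c) (hac : G.Adj a c) :
    3 ≤ ∑ j, ws j := by
  classical
  have key : ∀ j : Fin t, (I j).indicator (fun _ => ws j) a +
      (I j).indicator (fun _ => ws j) b + (I j).indicator (fun _ => ws j) c ≤ ws j := by
    intro j
    by_cases ha : a ∈ I j
    · have hb : b ∉ I j := fun h => h1 j a ha b h hab
      have hc : c ∉ I j := fun h => h1 j a ha c h hac
      simp [Set.indicator_of_mem ha, Set.indicator_of_notMem hb,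
        Set.indicator_of_notMem hc]
    · by_cases hb : b ∈ I j
      · have hc : c ∉ I j := fun h => h1 j b hb c h hbc
        simp [Set.indicator_of_mem hb, Set.indicator_of_notMem ha,
          Set.indicator_of_notMem hc]
      · simp only [Set.indicator_of_notMem ha, Set.indicator_of_notMem hb,
          zero_add]
        exact ind_le I ws h0 j c
  have h2 : (3:ℝ) ≤ ∑ j, ((I j).indicator (fun _ => ws j) a +
      (I j).indicator (fun _ => ws j) b + (I j).indicator (fun _ => ws j) c) := by
    rw [Finset.sum_add_distrib, Finset.sum_add_distrib]
    linarith [hcov a, hcov b, hcov c]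
  exact h2.trans (Finset.sum_le_sum fun j _ => key j)

lemma extract (h0 : ∀ j, 0 ≤ ws j)
    (hcov : ∀ u : V, 1 ≤ ∑ j, (I j).indicator (fun _ => ws j) u)
    (S : Finset V) (hS : S.Nonempty) :
    ∃ j : Fin t, (S.card : ℝ) ≤ (∑ j, ws j) * ((S.filter (· ∈ I j)).card : ℝ) := by
  classical
  obtain ⟨u0, hu0⟩ := hS
  rcases Nat.eq_zero_or_pos t with ht | ht
  · subst ht
    exact absurd (hcov u0) (by simp)
  have hne : (Finset.univ : Finset (Fin t)).Nonempty := ⟨⟨0, ht⟩, mem_univ _⟩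
  have key : (S.card : ℝ) ≤ ∑ j, ws j * ((S.filter (· ∈ I j)).card : ℝ) := by
    have h2 : (S.card : ℝ) ≤ ∑ u ∈ S, ∑ j, (I j).indicator (fun _ => ws j) u := by
      calc (S.card : ℝ) = ∑ _u ∈ S, (1:ℝ) := by simp
        _ ≤ _ := Finset.sum_le_sum fun u _ => hcov u
    rw [Finset.sum_comm] at h2
    refine h2.trans (le_of_eq (Finset.sum_congr rfl fun j _ => ?_))
    calc ∑ u ∈ S, (I j).indicator (fun _ => ws j) u
        = ∑ u ∈ S, if u ∈ I j then ws j else 0 := by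
          refine Finset.sum_congr rfl fun u _ => ?_
          simp [Set.indicator_apply]
      _ = ∑ u ∈ S.filter (· ∈ I j), ws j := (Finset.sum_filter _ _).symm
      _ = ws j * ((S.filter (· ∈ I j)).card : ℝ) := by
          rw [Finset.sum_const, nsmul_eq_mul, mul_comm]
  obtain ⟨j0, _, hj0⟩ := Finset.exists_max_image (Finset.univ : Finset (Fin t))
    (fun j => (S.filter (· ∈ I j)).card) hne
  refine ⟨j0, key.trans ?_⟩
  calc ∑ j, ws j * ((S.filter (· ∈ I j)).card : ℝ)
      ≤ ∑ j, ws j * ((S.filter (· ∈ I j0)).card : ℝ) := by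
        refine Finset.sum_le_sum fun j _ => ?_
        exact mul_le_mul_of_nonneg_left (by exact_mod_cast hj0 j (mem_univ j)) (h0 j)
    _ = (∑ j, ws j) * ((S.filter (· ∈ I j0)).card : ℝ) := by
        rw [← Finset.sum_mul]

end Frac

lemma one_lt_log_three : (1:ℝ) < Real.log 3 := by
  rw [Real.lt_log_iff_exp_lt (by norm_num)]
  exact Real.exp_one_lt_d9.trans_le (by norm_num)

lemma log_four_ge : (4:ℝ)/3 ≤ Real.log 4 := by
  rw [Real.le_log_iff_exp_le (by norm_num)]
  have h1 : Real.exp 1 < 2.7182818286 := Real.exp_one_lt_d9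
  have h2 : Real.exp (4/3) ^ 3 = Real.exp 1 ^ 4 := by
    rw [← Real.exp_nat_mul, ← Real.exp_nat_mul]; norm_num
  have h3 : Real.exp (4/3) ^ 3 < 4 ^ 3 := by
    rw [h2]
    have h4 : Real.exp 1 ^ 4 < (2.7182818286:ℝ) ^ 4 :=
      pow_lt_pow_left₀ h1 (Real.exp_pos 1).le (by norm_num)
    have h5 : (2.7182818286:ℝ) ^ 4 < 4 ^ 3 := by norm_num
    linarith
  exact (lt_of_pow_lt_pow_left₀ 3 (by norm_num) h3).le

lemma log_five_ge : (3:ℝ)/2 ≤ Real.log 5 := by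
  rw [Real.le_log_iff_exp_le (by norm_num)]
  have h1 : Real.exp 1 < 2.7182818286 := Real.exp_one_lt_d9
  have h2 : Real.exp (3/2) ^ 2 = Real.exp 1 ^ 3 := by
    rw [← Real.exp_nat_mul, ← Real.exp_nat_mul]; norm_num
  have h3 : Real.exp (3/2) ^ 2 < 5 ^ 2 := by
    rw [h2]
    have h4 : Real.exp 1 ^ 3 < (2.7182818286:ℝ) ^ 3 :=
      pow_lt_pow_left₀ h1 (Real.exp_pos 1).le (by norm_num)
    have h5 : (2.7182818286:ℝ) ^ 3 < 5 ^ 2 := by norm_num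
    linarith
  exact (lt_of_pow_lt_pow_left₀ 2 (by norm_num) h3).le

/-- Main greedy induction. -/
lemma main_induction {V : Type*} [Fintype V] (G : SimpleGraph V) {t : ℕ}
    (I : Fin t → Set V) (ws : Fin t → ℝ)
    (h0 : ∀ j, 0 ≤ ws j) (h1 : ∀ j, IsIndepSet G (I j))
    (hcov : ∀ u : V, 1 ≤ ∑ j, (I j).indicator (fun _ => ws j) u) :
    ∀ n : ℕ, ∀ S : Finset V, S.card = n → 3 ≤ n →
      ∃ k : ℕ, GoodCol G S k ∧ (k : ℝ) ≤ (∑ j, ws j) * Real.log n := by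
  classical
  intro n
  induction n using Nat.strong_induction_on with
  | _ n IH =>
    intro S hcard hn3
    set w : ℝ := ∑ j, ws j with hwdef
    have hSne : S.Nonempty := card_pos.mp (by omega)
    obtain ⟨u0, hu0⟩ := id hSne
    have hw1 : 1 ≤ w := w_ge_one I ws h0 hcov u0
    have hlogn : (1:ℝ) < Real.log n := by
      calc (1:ℝ) < Real.log 3 := one_lt_log_three
        _ ≤ Real.log n := Real.log_le_log (by norm_num) (by exact_mod_cast hn3)
    by_cases hedge : ∃ u ∈ S, ∃ v ∈ S, G.Adj u v
    · obtain ⟨ue, hue, ve, hve, huve⟩ := hedge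
      have hw2 : 2 ≤ w := w_ge_two G I ws h0 h1 hcov huve
      by_cases hn5 : n < 5
      · -- base cases n = 3, 4
        by_cases htri : ∃ a ∈ S, ∃ b ∈ S, ∃ c ∈ S, G.Adj a b ∧ G.Adj b c ∧ G.Adj a c
        · obtain ⟨a, ha, b, hb, c, hc, hab, hbc, hac⟩ := htri
          have hw3 : 3 ≤ w := w_ge_three G I ws h0 h1 hcov hab hbc hac
          refine ⟨n, by rw [← hcard]; exact goodCol_card G S, ?_⟩
          have hn34 : n = 3 ∨ n = 4 := by omega
          rcases hn34 with rfl | rfl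
          · have hl := one_lt_log_three
            have := mul_bd hw3 hl.le (by norm_num) (by norm_num)
            push_cast
            linarith
          · have hl : (4:ℝ)/3 ≤ Real.log 4 := log_four_ge
            have := mul_bd hw3 hl (by norm_num) (by norm_num)
            push_cast
            linarith
        · refine ⟨2, goodCol_small G S (by omega) htri, ?_⟩
          have := mul_bd hw2 hlogn.le (by norm_num) (by norm_num)
          push_cast
          linarith
      · -- inductive step, n ≥ 5
        push_neg at hn5
        obtain ⟨j0, hj0⟩ := extract I ws h0 hcov S hSne
        set X : Finset V := S.filter (· ∈ I j0) with hXdef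
        have hXS : X ⊆ S := filter_subset _ _
        set S' : Finset V := S \ X with hS'def
        have hcard' : S'.card = n - X.card := by
          rw [hS'def, card_sdiff_of_subset hXS, hcard]
        have hXle : X.card ≤ n := hcard ▸ card_le_card hXS
        rw [hcard] at hj0
        have hn0 : (0:ℝ) < n := by
          have : (3:ℝ) ≤ n := by exact_mod_cast hn3
          linarith
        have hX1 : 1 ≤ X.card := by
          by_contra h
          have hx0 : X.card = 0 := by omega
          rw [hx0] at hj0
          simp at hj0
          linarith
        -- extension of colorings
        have ext : ∀ k' : ℕ, GoodCol G S' k' → GoodCol G S (k' + 1) := by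
          rintro k' ⟨C, hClt, hCp⟩
          have hmem : ∀ v ∈ S, v ∉ I j0 → v ∈ S' := by
            intro v hv hvn
            rw [hS'def, mem_sdiff]
            exact ⟨hv, by rw [hXdef, mem_filter]; exact fun h => hvn h.2⟩
          refine ⟨fun v => if v ∈ I j0 then k' else C v, ?_, ?_⟩
          · intro v hv
            dsimp only
            split_ifs with h
            · omega
            · exact lt_of_lt_of_le (hClt v (hmem v hv h)) (by omega)
          · intro u hu v hv hadj
            dsimp only
            split_ifs with h h' h'
            · exact absurd hadj (h1 j0 u h v h')
            · exact fun he => absurd he.symm (Nat.ne_of_lt (hClt v (hmem v hv h')))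
            · exact Nat.ne_of_lt (hClt u (hmem u hu h))
            · exact hCp u (hmem u hu h) v (hmem v hv h') hadj
        by_cases hn'3 : 3 ≤ S'.card
        · obtain ⟨k', hgood', hk'⟩ := IH S'.card (by omega) S' rfl hn'3
          refine ⟨k' + 1, ext k' hgood', ?_⟩
          -- numeric part
          have hw0 : (0:ℝ) < w := by linarith
          have hcX : (n : ℝ) / w ≤ (X.card : ℝ) := by
            rw [div_le_iff₀ hw0]
            linarith [hj0]
          have hn'cast : ((S'.card : ℕ) : ℝ) = (n : ℝ) - (X.card : ℝ) := by
            rw [hcard']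
            push_cast [Nat.cast_sub hXle]
            ring
          have hn'le : ((S'.card : ℕ) : ℝ) ≤ (n : ℝ) * (1 - 1/w) := by
            rw [hn'cast]
            have : (n:ℝ) * (1 - 1/w) = n - n/w := by ring
            rw [this]
            linarith
          have h1w : (0:ℝ) < 1 - 1/w := by
            have : 1/w ≤ 1/2 := by
              apply div_le_div_of_nonneg_left <;> linarith
            linarith
          have hn'pos : (0:ℝ) < ((S'.card : ℕ) : ℝ) := by
            have : (3:ℝ) ≤ (S'.card : ℝ) := by exact_mod_cast hn'3
            linarith
          have hA : Real.log (S'.card : ℝ) ≤ Real.log ((n:ℝ) * (1 - 1/w)) :=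
            Real.log_le_log hn'pos hn'le
          rw [Real.log_mul (by linarith) (by linarith)] at hA
          have hB : Real.log (1 - 1/w) ≤ -(1/w) := by
            have := Real.log_le_sub_one_of_pos h1w
            linarith
          have hwinv : w * (1/w) = 1 := by
            field_simp
          push_cast
          calc (k' : ℝ) + 1 ≤ w * Real.log (S'.card : ℝ) + 1 := by linarith
            _ ≤ w * (Real.log (n:ℝ) + Real.log (1 - 1/w)) + 1 := by nlinarith
            _ = w * Real.log (n:ℝ) + w * Real.log (1 - 1/w) + 1 := by ring
            _ ≤ w * Real.log (n:ℝ) + w * (-(1/w)) + 1 := by nlinarith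
            _ = w * Real.log (n:ℝ) := by
                have : w * (-(1/w)) = -1 := by rw [mul_neg, hwinv]
                rw [this]; ring
        · -- S' has at most 2 vertices
          push_neg at hn'3
          have hgood2 : GoodCol G S' 2 :=
            goodCol_mono (by omega) (goodCol_card G S')
          refine ⟨3, ext 2 hgood2, ?_⟩
          have hlog5 : Real.log 5 ≤ Real.log n :=
            Real.log_le_log (by norm_num) (by exact_mod_cast hn5)
          have h32 : (3:ℝ)/2 ≤ Real.log n := le_trans log_five_ge hlog5
          have := mul_bd hw2 h32 (by norm_num) (by norm_num)
          push_cast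
          linarith
    · -- no edge in S : one color suffices
      push_neg at hedge
      refine ⟨1, ⟨fun _ => 0, fun v _ => Nat.zero_lt_one, ?_⟩, ?_⟩
      · intro u hu v hv hadj
        exact absurd hadj (hedge u hu v hv)
      · have := mul_bd hw1 hlogn.le (by norm_num) (by norm_num)
        push_cast
        linarith

/-- For every finite simple graph `G` with at least `3`
vertices, `χ(G) ≤ χ_f(G) · ln |V(G)|`. -/
theorem chromaticNumber_le_fracChromaticNumber_mul_log
    {V : Type*} [Fintype V] (G : SimpleGraph V) (hV : 3 ≤ Fintype.card V) :
    ((G.chromaticNumber.toNat : ℝ)) ≤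
      fracChromaticNumber G * Real.log (Fintype.card V) := by
  classical
  set 𝒮 : Set ℝ := {w : ℝ | ∃ (t : ℕ) (I : Fin t → Set V) (ws : Fin t → ℝ),
    (∀ j, 0 ≤ ws j) ∧ (∀ j, IsIndepSet G (I j)) ∧ (∑ j, ws j = w) ∧
    ∀ u : V, 1 ≤ ∑ j, (I j).indicator (fun _ => ws j) u} with h𝒮
  have hlogpos : (0:ℝ) < Real.log (Fintype.card V) := by
    apply Real.log_pos
    have : (3:ℝ) ≤ (Fintype.card V : ℝ) := by exact_mod_cast hV
    linarith
  -- 𝒮 is nonempty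
  have hne : 𝒮.Nonempty := by
    refine ⟨(Fintype.card V : ℝ), Fintype.card V, fun j => {(Fintype.equivFin V).symm j},
      fun _ => 1, fun _ => zero_le_one, ?_, by simp, ?_⟩
    · intro j u hu v hv hadj
      simp only [Set.mem_singleton_iff] at hu hv
      subst hu; subst hv
      exact G.irrefl hadj
    · intro u
      have : ∀ j : Fin (Fintype.card V),
          ({(Fintype.equivFin V).symm j} : Set V).indicator (fun _ => (1:ℝ)) u
            = if j = Fintype.equivFin V u then 1 else 0 := by
        intro j
        by_cases h : j = Fintype.equivFin V u
        · subst h; simp [Set.indicator_apply]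
        · rw [Set.indicator_of_notMem, if_neg h]
          simp only [Set.mem_singleton_iff]
          intro hu
          exact h (by rw [hu]; simp)
      rw [Finset.sum_congr rfl fun j _ => this j]
      simp
  -- each member of 𝒮 bounds χ
  have hbd : ∀ w ∈ 𝒮, (G.chromaticNumber.toNat : ℝ) ≤ w * Real.log (Fintype.card V) := by
    rintro w ⟨t, I, ws, h0, h1, hsum, hcov⟩
    obtain ⟨k, ⟨C, hClt, hCp⟩, hk⟩ := main_induction G I ws h0 h1 hcov
      (Fintype.card V) Finset.univ (by simp) hV
    have hcol : G.Colorable k := by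
      refine ⟨SimpleGraph.Coloring.mk (fun v => ⟨C v, hClt v (Finset.mem_univ v)⟩) ?_⟩
      intro u v hadj
      simp only [Ne, Fin.mk.injEq]
      exact hCp u (Finset.mem_univ u) v (Finset.mem_univ v) hadj
    have hχ : G.chromaticNumber ≤ (k : ℕ∞) := hcol.chromaticNumber_le
    have hχ' : G.chromaticNumber.toNat ≤ k := by
      have := ENat.toNat_le_toNat hχ (by simp)
      simpa using this
    calc (G.chromaticNumber.toNat : ℝ) ≤ (k : ℝ) := by exact_mod_cast hχ'
      _ ≤ (∑ j, ws j) * Real.log (Fintype.card V) := hk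
      _ = w * Real.log (Fintype.card V) := by rw [hsum]
  -- conclude via sInf
  have hdiv : (G.chromaticNumber.toNat : ℝ) / Real.log (Fintype.card V) ≤ sInf 𝒮 := by
    apply le_csInf hne
    intro w hw
    rw [div_le_iff₀ hlogpos]
    exact hbd w hw
  have : fracChromaticNumber G = sInf 𝒮 := rfl
  rw [this]
  rw [div_le_iff₀ hlogpos] at hdiv
  linarith
end

section
/- Let G and H be finite simple graphs, let φ be a graph homomorphism from G to H, let c = χ(H) ≥ 2, and let d = max_{v ∈ V(G)} |{φ(w) : (v,w) ∈ E(G)}| with d ≥ 1. Then χ(G) ≤ 2d(d+1)·log₂ c. -/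
open Finset

set_option maxHeartbeats 2000000



private lemma geom_aux (c d : ℕ) (hc : 2 ≤ c) :
    ∑ k ∈ Finset.range (d+1), c^k ≤ 2 * c^d := by
  induction d with
  | zero => simp
  | succ d ih =>
    rw [Finset.sum_range_succ]
    have h2 : 2 * c^d ≤ c^(d+1) := by
      rw [pow_succ, mul_comm (c^d) c]
      exact Nat.mul_le_mul_right _ hc
    calc ∑ k ∈ Finset.range (d+1), c^k + c^(d+1) ≤ 2*c^d + c^(d+1) :=
          Nat.add_le_add_right ih _
      _ ≤ c^(d+1) + c^(d+1) := Nat.add_le_add_right h2 _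
      _ = 2 * c^(d+1) := by ring

private lemma R_card_le (c d : ℕ) (hc : 2 ≤ c) :
    ((Finset.univ.filter (fun aS : Fin c × Finset (Fin c) =>
        aS.2.card ≤ d ∧ aS.1 ∉ aS.2)).card) ≤ 2 * c^(d+1) := by
  classical
  have hsub : (Finset.univ.filter (fun aS : Fin c × Finset (Fin c) =>
      aS.2.card ≤ d ∧ aS.1 ∉ aS.2)) ⊆
      (Finset.univ : Finset (Fin c)) ×ˢ
        ((Finset.univ : Finset (Finset (Fin c))).filter (fun S => S.card ≤ d)) := by
    intro aS haS
    rw [Finset.mem_filter] at haS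
    rw [Finset.mem_product, Finset.mem_filter]
    exact ⟨Finset.mem_univ _, Finset.mem_univ _, haS.2.1⟩
  have hcard2 : ((Finset.univ : Finset (Finset (Fin c))).filter (fun S => S.card ≤ d)).card
      ≤ 2 * c^d := by
    have heq : ((Finset.univ : Finset (Finset (Fin c))).filter (fun S => S.card ≤ d))
        = (Finset.range (d+1)).biUnion
            (fun k => Finset.powersetCard k (Finset.univ : Finset (Fin c))) := by
      ext S
      simp only [Finset.mem_filter, Finset.mem_univ, true_and, Finset.mem_biUnion,
        Finset.mem_range, Finset.mem_powersetCard]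
      constructor
      · intro h; exact ⟨S.card, Nat.lt_succ_of_le h, Finset.subset_univ _, rfl⟩
      · rintro ⟨k, hk, -, rfl⟩; omega
    rw [heq]
    calc ((Finset.range (d+1)).biUnion
            (fun k => Finset.powersetCard k (Finset.univ : Finset (Fin c)))).card
        ≤ ∑ k ∈ Finset.range (d+1), (Finset.powersetCard k (Finset.univ : Finset (Fin c))).card :=
          Finset.card_biUnion_le
      _ ≤ ∑ k ∈ Finset.range (d+1), c^k := by
          apply Finset.sum_le_sum
          intro k _
          rw [Finset.card_powersetCard]
          simp only [Finset.card_univ, Fintype.card_fin]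
          exact Nat.choose_le_pow c k
      _ ≤ 2 * c^d := geom_aux c d hc
  calc _ ≤ _ := Finset.card_le_card hsub
    _ = c * ((Finset.univ : Finset (Finset (Fin c))).filter (fun S => S.card ≤ d)).card := by
        rw [Finset.card_product]; simp
    _ ≤ c * (2 * c^d) := Nat.mul_le_mul_left _ hcard2
    _ = 2 * c^(d+1) := by ring



private lemma exists_good_family (c d t : ℕ)
    (hnum : (((Finset.univ.filter (fun aS : Fin c × Finset (Fin c) =>
        aS.2.card ≤ d ∧ aS.1 ∉ aS.2)).card : ℝ)) *
        (1 - ((d:ℝ)/((d:ℝ)+1))^d)^t < 1) :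
    ∃ g : Fin t → Fin c → Fin (d+1),
      ∀ a : Fin c, ∀ S : Finset (Fin c), a ∉ S → S.card ≤ d →
        ∃ r : Fin t, ∀ s ∈ S, g r s ≠ g r a := by
  classical
  set R := Finset.univ.filter (fun aS : Fin c × Finset (Fin c) =>
        aS.2.card ≤ d ∧ aS.1 ∉ aS.2) with hR
  set p : ℝ := ((d:ℝ)/((d:ℝ)+1))^d with hp
  set Bad : Fin c → Finset (Fin c) → Finset (Fin c → Fin (d+1)) :=
    fun a S => Finset.univ.filter (fun g => ¬ ∀ s ∈ S, g s ≠ g a) with hBadDef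
  have hΩ : Fintype.card (Fin c → Fin (d+1)) = (d+1)^c := by
    simp [Fintype.card_fun]
  -- p bounds
  have hp01 : 0 ≤ p ∧ p ≤ 1 := by
    constructor
    · positivity
    · apply pow_le_one₀ (by positivity)
      rw [div_le_one (by positivity)]; linarith
  -- Bad card bound
  have hBad : ∀ a : Fin c, ∀ S : Finset (Fin c), a ∉ S → S.card ≤ d →
      ((Bad a S).card : ℝ) ≤ (1 - p) * ((d+1)^c : ℕ) := by
    intro a S ha hS
    set Good : Finset (Fin c → Fin (d+1)) :=
      Finset.univ.filter (fun g => ∀ s ∈ S, g s ≠ g a) with hGoodDef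
    have hsplit : (Good.card) + (Bad a S).card = (d+1)^c := by
      rw [hGoodDef, hBadDef]
      rw [Finset.card_filter_add_card_filter_not]
      · rw [Finset.card_univ, hΩ]
    -- lower bound on Good
    have hSa : S ⊆ Finset.univ.erase a := by
      intro s hs
      exact Finset.mem_erase.mpr ⟨fun h => ha (h ▸ hs), Finset.mem_univ _⟩
    have hkc : S.card ≤ c - 1 := by
      have := Finset.card_le_card hSa
      simpa [Finset.card_erase_of_mem] using this
    have hc1 : 1 ≤ c := by
      have := a.2; omega
    have hGood : (d+1)^(c - S.card) * d^(S.card) ≤ Good.card := by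
      set B : Finset (Fin c → Fin (d+1)) :=
        Finset.univ.biUnion (fun v : Fin (d+1) =>
          Fintype.piFinset (fun i : Fin c =>
            if i = a then {v} else if i ∈ S then Finset.univ.erase v else Finset.univ)) with hBdef
      have hBG : B ⊆ Good := by
        intro g hg
        rw [hBdef, Finset.mem_biUnion] at hg
        obtain ⟨v, -, hv⟩ := hg
        rw [Fintype.mem_piFinset] at hv
        rw [hGoodDef, Finset.mem_filter]
        refine ⟨Finset.mem_univ _, fun s hs => ?_⟩
        have h1 := hv a
        simp only [if_pos] at h1
        rw [Finset.mem_singleton] at h1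
        have hsa : s ≠ a := fun h => ha (h ▸ hs)
        have h2 := hv s
        simp only [if_neg hsa, if_pos hs, Finset.mem_erase] at h2
        rw [h1]
        exact h2.1
      have hcards : B.card = (d+1) * ((d+1)^(c - 1 - S.card) * d^(S.card)) := by
        rw [hBdef]
        rw [Finset.card_biUnion]
        · have hone : ∀ v : Fin (d+1),
              (Fintype.piFinset (fun i : Fin c =>
                if i = a then {v} else if i ∈ S then Finset.univ.erase v else Finset.univ)).card
              = (d+1)^(c - 1 - S.card) * d^(S.card) := by
            intro v
            rw [Fintype.card_piFinset]
            have : ∀ i : Fin c,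
                (if i = a then ({v} : Finset (Fin (d+1))) else if i ∈ S
                  then Finset.univ.erase v else Finset.univ).card
                = if i = a then 1 else if i ∈ S then d else (d+1) := by
              intro i
              by_cases h1 : i = a
              · simp [h1]
              · by_cases h2 : i ∈ S
                · simp [h1, h2, Finset.card_erase_of_mem]
                · simp [h1, h2]
            rw [Finset.prod_congr rfl (fun i _ => this i)]
            rw [← Finset.mul_prod_erase Finset.univ _ (Finset.mem_univ a)]
            rw [if_pos rfl, one_mul]
            have hcongr : ∀ i ∈ Finset.univ.erase a,
                (if i = a then 1 else if i ∈ S then d else (d+1))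
                = if i ∈ S then d else (d+1) := by
              intro i hi
              rw [if_neg (Finset.mem_erase.mp hi).1]
            rw [Finset.prod_congr rfl hcongr]
            rw [Finset.prod_ite]
            rw [Finset.prod_const, Finset.prod_const]
            have hf1 : Finset.filter (fun i => i ∈ S) (Finset.univ.erase a) = S := by
              ext s
              simp only [Finset.mem_filter, Finset.mem_erase, Finset.mem_univ, true_and, and_true]
              constructor
              · rintro ⟨-, h⟩; exact h
              · intro h; exact ⟨fun (he : s = a) => ha (he ▸ h), h⟩
            have hf2 : (Finset.filter (fun i => ¬ i ∈ S) (Finset.univ.erase a)).card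
                = c - 1 - S.card := by
              have := Finset.card_filter_add_card_filter_not
                (s := Finset.univ.erase a) (p := fun i => i ∈ S)
              rw [hf1] at this
              have hce : (Finset.univ.erase a).card = c - 1 := by
                simp [Finset.card_erase_of_mem]
              omega
            rw [hf1, hf2]
            ring
          rw [Finset.sum_congr rfl (fun v _ => hone v)]
          rw [Finset.sum_const, Finset.card_univ, Fintype.card_fin]
          ring
        · -- pairwise disjoint
          intro v1 h1 v2 h2 hne
          simp only [Finset.disjoint_left]
          intro g hg1 hg2
          rw [Fintype.mem_piFinset] at hg1 hg2
          have e1 := hg1 a; have e2 := hg2 a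
          simp only [if_pos] at e1 e2
          rw [Finset.mem_singleton] at e1 e2
          exact hne (by rw [← e1, ← e2])
      have heq : (d+1) * ((d+1)^(c - 1 - S.card) * d^(S.card))
          = (d+1)^(c - S.card) * d^(S.card) := by
        have h1 : c - S.card = (c - 1 - S.card) + 1 := by omega
        rw [h1, pow_succ]
        ring
      calc (d+1)^(c - S.card) * d^(S.card) = B.card := by rw [hcards, heq]
        _ ≤ Good.card := Finset.card_le_card hBG
    -- now the real bound
    have hreal : (p * ((d+1)^c : ℕ) : ℝ) ≤ ((d+1)^(c - S.card) * d^(S.card) : ℕ) := by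
      push_cast
      have hkc' : S.card ≤ c := le_trans hkc (Nat.sub_le _ _)
      have hsplitpow : ((d:ℝ)+1)^c = ((d:ℝ)+1)^(S.card) * ((d:ℝ)+1)^(c - S.card) := by
        rw [← pow_add]
        congr 1
        omega
      have hid : ((d:ℝ)/((d:ℝ)+1))^(S.card) * ((d:ℝ)+1)^c
          = ((d:ℝ)+1)^(c - S.card) * (d:ℝ)^(S.card) := by
        rw [hsplitpow, div_pow]
        field_simp
      have hmono : p ≤ ((d:ℝ)/((d:ℝ)+1))^(S.card) := by
        rw [hp]
        apply pow_le_pow_of_le_one (by positivity)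
        · rw [div_le_one (by positivity)]; linarith
        · exact hS
      calc p * (((d:ℝ)+1)^c) ≤ ((d:ℝ)/((d:ℝ)+1))^(S.card) * ((d:ℝ)+1)^c := by
            apply mul_le_mul_of_nonneg_right hmono (by positivity)
        _ = ((d:ℝ)+1)^(c - S.card) * (d:ℝ)^(S.card) := hid
    have hBadNat : ((Bad a S).card : ℝ) = ((d+1)^c : ℕ) - (Good.card : ℝ) := by
      have := hsplit
      push_cast [← this]
      ring
    rw [hBadNat]
    have hGoodR : ((d+1)^(c - S.card) * d^(S.card) : ℕ) ≤ (Good.card : ℝ) := by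
      exact_mod_cast hGood
    have := le_trans hreal hGoodR
    push_cast at this ⊢
    linarith
  -- failing tuples
  set F : Finset (Fin t → Fin c → Fin (d+1)) :=
    Finset.univ.filter (fun gs => ∃ aS ∈ R, ∀ r, gs r ∈ Bad aS.1 aS.2) with hFdef
  have hFsub : F ⊆ R.biUnion (fun aS => Fintype.piFinset (fun _ : Fin t => Bad aS.1 aS.2)) := by
    intro gs hgs
    rw [hFdef, Finset.mem_filter] at hgs
    obtain ⟨-, aS, haS, hall⟩ := hgs
    rw [Finset.mem_biUnion]
    exact ⟨aS, haS, Fintype.mem_piFinset.mpr hall⟩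
  have hFcard : (F.card : ℝ) < (Fintype.card (Fin t → Fin c → Fin (d+1)) : ℝ) := by
    have h1 : F.card ≤ ∑ aS ∈ R, ((Bad aS.1 aS.2).card)^t := by
      calc F.card ≤ (R.biUnion (fun aS => Fintype.piFinset (fun _ : Fin t => Bad aS.1 aS.2))).card :=
            Finset.card_le_card hFsub
        _ ≤ ∑ aS ∈ R, (Fintype.piFinset (fun _ : Fin t => Bad aS.1 aS.2)).card :=
            Finset.card_biUnion_le
        _ = ∑ aS ∈ R, ((Bad aS.1 aS.2).card)^t := by
            apply Finset.sum_congr rfl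
            intro aS _
            rw [Fintype.card_piFinset]
            simp
    have h2 : (∑ aS ∈ R, (((Bad aS.1 aS.2).card)^t : ℝ)) ≤
        (R.card : ℝ) * ((1-p) * ((d+1)^c : ℕ))^t := by
      have hb : ∀ aS ∈ R, (((Bad aS.1 aS.2).card)^t : ℝ) ≤ ((1-p) * ((d+1)^c : ℕ))^t := by
        intro aS haS
        rw [hR, Finset.mem_filter] at haS
        have hbb := hBad aS.1 aS.2 haS.2.2 haS.2.1
        exact pow_le_pow_left₀ (by positivity) hbb t
      calc (∑ aS ∈ R, (((Bad aS.1 aS.2).card)^t : ℝ))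
          ≤ ∑ _aS ∈ R, ((1-p) * ((d+1)^c : ℕ))^t := Finset.sum_le_sum hb
        _ = (R.card : ℝ) * ((1-p) * ((d+1)^c : ℕ))^t := by
            rw [Finset.sum_const, nsmul_eq_mul]
    have hΩpos : (0:ℝ) < (((d+1)^c : ℕ) : ℝ)^t := by positivity
    have h3 : ((R.card : ℝ)) * ((1-p) * ((d+1)^c : ℕ))^t < (((d+1)^c : ℕ) : ℝ)^t := by
      rw [mul_pow, ← mul_assoc]
      calc (R.card : ℝ) * (1-p)^t * (((d+1)^c : ℕ) : ℝ)^t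
          < 1 * (((d+1)^c : ℕ) : ℝ)^t := by
            exact mul_lt_mul_of_pos_right hnum hΩpos
        _ = (((d+1)^c : ℕ) : ℝ)^t := by ring
    have h1R : ((F.card : ℕ) : ℝ) ≤ ∑ aS ∈ R, (((Bad aS.1 aS.2).card)^t : ℝ) := by
      exact_mod_cast h1
    have hcardfun : (Fintype.card (Fin t → Fin c → Fin (d+1)) : ℝ) = (((d+1)^c : ℕ) : ℝ)^t := by
      rw [Fintype.card_fun, hΩ]
      push_cast
      simp
    rw [hcardfun]
    calc (F.card : ℝ) ≤ _ := h1R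
      _ ≤ _ := h2
      _ < _ := h3
  -- extract a good tuple
  have hne : F ≠ Finset.univ := by
    intro h
    rw [h, Finset.card_univ] at hFcard
    exact lt_irrefl _ hFcard
  have hex : ∃ gs : Fin t → Fin c → Fin (d+1), gs ∉ F := by
    by_contra hcon
    push_neg at hcon
    exact hne (Finset.eq_univ_iff_forall.mpr hcon)
  obtain ⟨gs, hgs⟩ := hex
  refine ⟨gs, fun a S ha hS => ?_⟩
  rw [hFdef, Finset.mem_filter] at hgs
  push_neg at hgs
  have := hgs (Finset.mem_univ _) (a, S)
    (by rw [hR, Finset.mem_filter]; exact ⟨Finset.mem_univ _, hS, ha⟩)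
  obtain ⟨r, hr⟩ := this
  refine ⟨r, ?_⟩
  rw [hBadDef] at hr
  simp only [Finset.mem_filter, Finset.mem_univ, true_and, not_not] at hr
  exact hr



/-- Let `φ` be a graph homomorphism from a finite simple
graph `G` to a finite simple graph `H`, let `c = χ(H) ≥ 2`, and let
`d = max_{v ∈ V(G)} |{φ(w) : (v,w) ∈ E(G)}| ≥ 1`.  Then
`χ(G) ≤ 2d(d+1)·log₂ c`. -/
theorem chromaticNumber_le_of_hom {V W : Type*} [Fintype V] [Fintype W]
    (G : SimpleGraph V) (H : SimpleGraph W) (φ : V → W)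
    (hφ : ∀ u v, G.Adj u v → H.Adj (φ u) (φ v))
    (c d : ℕ)
    (hc : H.chromaticNumber = (c : ℕ∞)) (hc2 : 2 ≤ c)
    (hd : d = Finset.univ.sup fun v : V => ({x : W | ∃ w, G.Adj v w ∧ φ w = x}).ncard)
    (hd1 : 1 ≤ d) :
    ((G.chromaticNumber.toNat : ℝ)) ≤ 2 * d * (d + 1) * Real.logb 2 c := by
  classical
  have hlog2pos : (0:ℝ) < Real.log 2 := Real.log_pos (by norm_num)
  have hcR : (2:ℝ) ≤ (c:ℝ) := by exact_mod_cast hc2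
  have hlogb1 : (1:ℝ) ≤ Real.logb 2 c := by
    rw [Real.logb, le_div_iff₀ hlog2pos, one_mul]
    exact Real.log_le_log (by norm_num) hcR
  obtain ⟨κ⟩ : H.Colorable c := SimpleGraph.chromaticNumber_le_iff_colorable.mp (le_of_eq hc)
  have key : ∀ (n : ℕ), G.Colorable n → (n : ℝ) ≤ 2*(d:ℝ)*((d:ℝ)+1)*Real.logb 2 c →
      ((G.chromaticNumber.toNat : ℝ)) ≤ 2 * d * (d + 1) * Real.logb 2 c := by
    intro n hcol hle
    have h1 : G.chromaticNumber ≤ (n : ℕ∞) := hcol.chromaticNumber_le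
    have hne : G.chromaticNumber ≠ ⊤ :=
      ne_top_of_le_ne_top (by simp) h1
    have h2 : (G.chromaticNumber.toNat : ℕ∞) ≤ (n:ℕ∞) := by
      rwa [ENat.coe_toNat hne]
    have h3 : G.chromaticNumber.toNat ≤ n := by exact_mod_cast h2
    have h4 : ((G.chromaticNumber.toNat : ℝ)) ≤ (n:ℝ) := by exact_mod_cast h3
    calc ((G.chromaticNumber.toNat : ℝ)) ≤ (n:ℝ) := h4
      _ ≤ 2*(d:ℝ)*((d:ℝ)+1)*Real.logb 2 c := hle
      _ = 2 * d * (d + 1) * Real.logb 2 c := by push_cast; ring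
  set av : V → Fin c := fun v => κ (φ v) with havdef
  set Fv : V → Finset W := fun v => Finset.univ.filter (fun x => ∃ w, G.Adj v w ∧ φ w = x)
    with hFvdef
  have hFvcard : ∀ v, (Fv v).card ≤ d := by
    intro v
    have h1 : ({x : W | ∃ w, G.Adj v w ∧ φ w = x}).ncard = (Fv v).card := by
      rw [Set.ncard_eq_toFinset_card']
      congr 1
      simp [hFvdef, Set.toFinset_setOf]
    have h2 : ({x : W | ∃ w, G.Adj v w ∧ φ w = x}).ncard ≤ d := by
      rw [hd]
      exact Finset.le_sup (f := fun v : V => ({x : W | ∃ w, G.Adj v w ∧ φ w = x}).ncard)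
        (Finset.mem_univ v)
    rw [← h1]
    exact h2
  set Sv : V → Finset (Fin c) := fun v => (Fv v).image κ with hSvdef
  have hSvcard : ∀ v, (Sv v).card ≤ d := fun v =>
    le_trans Finset.card_image_le (hFvcard v)
  have haS : ∀ v, av v ∉ Sv v := by
    intro v hmem
    rw [hSvdef] at hmem
    simp only [Finset.mem_image] at hmem
    obtain ⟨x, hx, heq⟩ := hmem
    rw [hFvdef] at hx
    simp only [Finset.mem_filter, Finset.mem_univ, true_and] at hx
    obtain ⟨w, hadj, rfl⟩ := hx
    exact κ.valid (hφ v w hadj) heq.symm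
  have hadjS : ∀ u v, G.Adj u v → av v ∈ Sv u := by
    intro u v h
    apply Finset.mem_image_of_mem
    rw [hFvdef]
    simp only [Finset.mem_filter, Finset.mem_univ, true_and]
    exact ⟨v, h, rfl⟩
  have haneq : ∀ u v, G.Adj u v → av u ≠ av v := fun u v h => κ.valid (hφ u v h)
  -- trivial case
  by_cases htriv : (c:ℝ) ≤ 2*(d:ℝ)*((d:ℝ)+1)*Real.logb 2 c
  · exact key c ⟨SimpleGraph.Coloring.mk av (fun {u v} h => haneq u v h)⟩ htriv
  -- d = 1 case
  by_cases hdone : d = 1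
  · subst hdone
    have hcol2 : G.Colorable 2 := by
      refine ⟨SimpleGraph.Coloring.mk
        (fun v => if (∀ w, G.Adj v w → av v < av w) then (0 : Fin 2) else 1) ?_⟩
      intro u v hA heq
      have huv : ∀ w, G.Adj u w → av w = av v := by
        intro w hw
        exact Finset.card_le_one.mp (hSvcard u) _ (hadjS u w hw) _ (hadjS u v hA)
      have hvu : ∀ w, G.Adj v w → av w = av u := by
        intro w hw
        exact Finset.card_le_one.mp (hSvcard v) _ (hadjS v w hw) _ (hadjS v u hA.symm)
      have hne := haneq u v hA
      by_cases hPu : (∀ w, G.Adj u w → av u < av w)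
      · by_cases hPv : (∀ w, G.Adj v w → av v < av w)
        · have h1 := hPu v hA
          have h2 := hPv u hA.symm
          exact absurd (lt_trans h1 h2) (lt_irrefl _)
        · rw [if_pos hPu, if_neg hPv] at heq
          exact absurd heq (by norm_num)
      · by_cases hPv : (∀ w, G.Adj v w → av v < av w)
        · rw [if_neg hPu, if_pos hPv] at heq
          exact absurd heq (by norm_num)
        · push_neg at hPu hPv
          obtain ⟨w1, hw1, hle1⟩ := hPu
          obtain ⟨w2, hw2, hle2⟩ := hPv
          rw [huv w1 hw1] at hle1
          rw [hvu w2 hw2] at hle2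
          exact hne (le_antisymm hle2 hle1)
    apply key 2 hcol2
    push_cast
    nlinarith [hlogb1]
  -- main probabilistic case: d ≥ 2
  have hd2 : 2 ≤ d := by omega
  push_neg at htriv
  obtain ⟨lam, hlam⟩ : ∃ lam : ℝ, lam = Real.log 2 := ⟨_, rfl⟩
  have hlog2pos' : (0:ℝ) < lam := by rw [hlam]; exact hlog2pos
  obtain ⟨x, hx⟩ : ∃ x : ℝ, x = Real.log (c:ℝ) := ⟨_, rfl⟩
  have hxpos : 0 < x := by rw [hx]; exact Real.log_pos (by linarith)
  obtain ⟨p, hpdef⟩ : ∃ p : ℝ, p = ((d:ℝ)/((d:ℝ)+1))^d := ⟨_, rfl⟩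
  have hdR1 : (1:ℝ) ≤ (d:ℝ) := by exact_mod_cast hd1
  have hp_pos0 : 0 < p := by rw [hpdef]; positivity
  have hp_half : p ≤ 1/2 := by
    have hneg2 : (-2:ℝ) ≤ 1/(d:ℝ) := by
      have h00 : (0:ℝ) ≤ 1/(d:ℝ) := by positivity
      linarith
    have h0 := one_add_mul_le_pow hneg2 d
    have hdd : (d:ℝ) * (1/(d:ℝ)) = 1 := by
      field_simp
    rw [hdd] at h0
    have h2 : (2:ℝ) ≤ (1 + 1/(d:ℝ))^d := by linarith
    have hinv : p * (1 + 1/(d:ℝ))^d = 1 := by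
      rw [hpdef, ← mul_pow]
      have hone : ((d:ℝ)/((d:ℝ)+1)) * (1 + 1/(d:ℝ)) = 1 := by
        field_simp
      rw [hone, one_pow]
    nlinarith [hp_pos0, h2, hinv]
  have hp_pos : 0 < p := hp_pos0
  have h1p_pos : 0 < 1 - p := by linarith
  obtain ⟨β, hβdef⟩ : ∃ β : ℝ, β = - Real.log (1 - p) := ⟨_, rfl⟩
  have hβ_pos : 0 < β := by
    rw [hβdef, neg_pos]
    exact Real.log_neg h1p_pos (by linarith)
  have hβ_le_one : β ≤ 1 := by
    have h1 : Real.log (1/(1-p)) ≤ 1/(1-p) - 1 := Real.log_le_sub_one_of_pos (by positivity)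
    have h2 : (1:ℝ)/(1-p) - 1 = p/(1-p) := by field_simp; ring
    have h3 : p/(1-p) ≤ 1 := by rw [div_le_one h1p_pos]; linarith [hp_half]
    calc β = Real.log ((1-p)⁻¹) := by rw [Real.log_inv, hβdef]
      _ = Real.log (1/(1-p)) := by rw [one_div]
      _ ≤ 1/(1-p) - 1 := h1
      _ = p/(1-p) := h2
      _ ≤ 1 := h3
  obtain ⟨t, htdef⟩ : ∃ t : ℕ, t = Nat.floor (2*(d:ℝ)*Real.logb 2 (c:ℝ)) := ⟨_, rfl⟩
  have hbudget_nonneg : (0:ℝ) ≤ 2*(d:ℝ)*Real.logb 2 c := by nlinarith [hlogb1, hdR1]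
  have ht_le : (t:ℝ) ≤ 2*(d:ℝ)*Real.logb 2 c := by
    rw [htdef]
    exact Nat.floor_le hbudget_nonneg
  have ht_gt : 2*(d:ℝ)*Real.logb 2 c - 1 < t := by
    rw [htdef]
    have := Nat.lt_floor_add_one (2*(d:ℝ)*Real.logb 2 (c:ℝ))
    linarith
  have hlogb_eq : Real.logb 2 (c:ℝ) = x / lam := by rw [hx, hlam, Real.logb]
  have hlam_lo : (0.6931471803:ℝ) < lam := by rw [hlam]; exact Real.log_two_gt_d9
  have hlam_hi : lam < (0.6931471808:ℝ) := by rw [hlam]; exact Real.log_two_lt_d9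
  have hxge : ∀ k : ℕ, 2^k ≤ c → (k:ℝ)*lam ≤ x := by
    intro k hk
    have h1 : Real.log ((2:ℝ)^k) ≤ Real.log (c:ℝ) := by
      apply Real.log_le_log (by positivity)
      exact_mod_cast hk
    rw [Real.log_pow] at h1
    rw [hx, hlam]
    exact h1
  have hlogb_ge : ∀ a b' : ℕ, 2^a ≤ c^b' → (a:ℝ) ≤ (b':ℝ)*Real.logb 2 (c:ℝ) := by
    intro a b' hab
    have h1 : Real.logb 2 ((2:ℝ)^a) ≤ Real.logb 2 ((c:ℝ)^b') := by
      apply Real.logb_le_logb_of_le (by norm_num) (by positivity)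
      exact_mod_cast hab
    rw [Real.logb_pow, Real.logb_pow, Real.logb_self_eq_one (by norm_num)] at h1
    rw [mul_one] at h1
    exact h1
  have hkey : lam + ((d:ℝ)+1)*x < (t:ℝ)*β := by
    have htx : 2*(d:ℝ)*x < lam*((t:ℝ)+1) := by
      have h1 : 2*(d:ℝ)*(x/lam) - 1 < (t:ℝ) := by
        rw [← hlogb_eq]; exact ht_gt
      have h2 : 2*(d:ℝ)*(x/lam) < (t:ℝ)+1 := by linarith
      calc 2*(d:ℝ)*x = (2*(d:ℝ)*(x/lam))*lam := by field_simp
        _ < ((t:ℝ)+1)*lam := mul_lt_mul_of_pos_right h2 hlog2pos'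
        _ = lam*((t:ℝ)+1) := by ring
    have hmain : lam*(lam + ((d:ℝ)+1)*x) ≤ (2*(d:ℝ)*x - lam)*β := by
      rcases Nat.lt_or_ge d 5 with hd5 | hd5
      · -- d ∈ {2,3,4}
        interval_cases d
        · -- d = 2
          have hpval : p = 4/9 := by rw [hpdef]; norm_num
          have h19 : Real.log ((10:ℝ)/9) ≤ 1/9 := by
            have := Real.log_le_sub_one_of_pos (show (0:ℝ) < 10/9 by norm_num)
            linarith
          have h110 : (1:ℝ)/10 ≤ Real.log ((10:ℝ)/9) := by
            have h0 := Real.log_le_sub_one_of_pos (show (0:ℝ) < 9/10 by norm_num)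
            have h1 : Real.log ((9:ℝ)/10) = - Real.log ((10:ℝ)/9) := by
              rw [← Real.log_inv]; norm_num
            rw [h1] at h0
            linarith
          have hβeq : β = lam - Real.log ((10:ℝ)/9) := by
            rw [hβdef, hpval, hlam]
            have h2 : (1:ℝ) - 4/9 = (10/9)/2 := by norm_num
            rw [h2, Real.log_div (by norm_num) (by norm_num)]
            ring
          have hβlo : lam - 1/9 ≤ β := by rw [hβeq]; linarith
          have hβhi : β ≤ lam - 1/10 := by rw [hβeq]; linarith
          have hc65 : 65 ≤ c := by
            by_contra hcon
            push_neg at hcon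
            have hc64 : c ≤ 64 := by omega
            have hcle : (c:ℝ) ≤ 2*(2:ℝ)*((2:ℝ)+1)*Real.logb 2 (c:ℝ) := by
              rcases le_or_gt c 12 with h12 | h12
              · have hcr : (c:ℝ) ≤ 12 := by exact_mod_cast h12
                nlinarith [hlogb1]
              · rcases le_or_gt c 44 with h44 | h44
                · have hlb := hlogb_ge 11 3 (by
                    calc 2^11 ≤ 13^3 := by norm_num
                      _ ≤ c^3 := Nat.pow_le_pow_left (by omega) 3)
                  have hcr : (c:ℝ) ≤ 44 := by exact_mod_cast h44
                  push_cast at hlb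
                  linarith [hlb]
                · have hlb := hlogb_ge 16 3 (by
                    calc 2^16 ≤ 45^3 := by norm_num
                      _ ≤ c^3 := Nat.pow_le_pow_left (by omega) 3)
                  have hcr : (c:ℝ) ≤ 64 := by exact_mod_cast hc64
                  push_cast at hlb
                  linarith [hlb]
            have := htriv
            push_cast at this hcle
            linarith
          have hx6 : 6*lam ≤ x := by
            have := hxge 6 (by omega)
            push_cast at this
            linarith
          have k1 : x*(4*β - 3*lam) ≥ x*(lam - 4/9) := by
            apply mul_le_mul_of_nonneg_left _ (le_of_lt hxpos)
            linarith
          have k2 : x*(lam - 4/9) ≥ (6*lam)*(lam - 4/9) := by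
            apply mul_le_mul_of_nonneg_right hx6
            nlinarith [hlam_lo]
          have k3 : (6*lam)*(lam - 4/9) ≥ lam*(2*lam - 1/10) := by
            nlinarith [hlam_lo]
          have k4 : lam*(β+lam) ≤ lam*(2*lam - 1/10) := by
            apply mul_le_mul_of_nonneg_left _ (le_of_lt hlog2pos')
            linarith
          push_cast
          linarith only [k1, k2, k3, k4]
        · -- d = 3
          have hpval : p = 27/64 := by rw [hpdef]; norm_num
          have hup : Real.log ((37:ℝ)/32) ≤ 5/32 := by
            have := Real.log_le_sub_one_of_pos (show (0:ℝ) < 37/32 by norm_num)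
            linarith
          have hlo : (5:ℝ)/37 ≤ Real.log ((37:ℝ)/32) := by
            have h0 := Real.log_le_sub_one_of_pos (show (0:ℝ) < 32/37 by norm_num)
            have h1 : Real.log ((32:ℝ)/37) = - Real.log ((37:ℝ)/32) := by
              rw [← Real.log_inv]; norm_num
            rw [h1] at h0
            linarith
          have hβeq : β = lam - Real.log ((37:ℝ)/32) := by
            rw [hβdef, hpval, hlam]
            have h2 : (1:ℝ) - 27/64 = (37/32)/2 := by norm_num
            rw [h2, Real.log_div (by norm_num) (by norm_num)]
            ring
          have hβlo : lam - 5/32 ≤ β := by rw [hβeq]; linarith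
          have hβhi : β ≤ lam - 5/37 := by rw [hβeq]; linarith
          have hc17 : 17 ≤ c := by
            by_contra hcon
            push_neg at hcon
            have hcr : (c:ℝ) ≤ 16 := by exact_mod_cast (by omega : c ≤ 16)
            have := htriv
            push_cast at this
            nlinarith [hlogb1]
          have hx4 : 4*lam ≤ x := by
            have := hxge 4 (by omega)
            push_cast at this
            linarith
          have k1 : x*(6*β - 4*lam) ≥ x*(2*lam - 15/16) := by
            apply mul_le_mul_of_nonneg_left _ (le_of_lt hxpos)
            linarith
          have k2 : x*(2*lam - 15/16) ≥ (4*lam)*(2*lam - 15/16) := by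
            apply mul_le_mul_of_nonneg_right hx4
            nlinarith [hlam_lo]
          have k3 : (4*lam)*(2*lam - 15/16) ≥ lam*(2*lam - 5/37) := by
            nlinarith [hlam_lo]
          have k4 : lam*(β+lam) ≤ lam*(2*lam - 5/37) := by
            apply mul_le_mul_of_nonneg_left _ (le_of_lt hlog2pos')
            linarith
          push_cast
          linarith only [k1, k2, k3, k4]
        · -- d = 4
          have hpval : p = 256/625 := by rw [hpdef]; norm_num
          have hup : Real.log ((738:ℝ)/625) ≤ 113/625 := by
            have := Real.log_le_sub_one_of_pos (show (0:ℝ) < 738/625 by norm_num)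
            linarith
          have hlo : (113:ℝ)/738 ≤ Real.log ((738:ℝ)/625) := by
            have h0 := Real.log_le_sub_one_of_pos (show (0:ℝ) < 625/738 by norm_num)
            have h1 : Real.log ((625:ℝ)/738) = - Real.log ((738:ℝ)/625) := by
              rw [← Real.log_inv]; norm_num
            rw [h1] at h0
            linarith
          have hβeq : β = lam - Real.log ((738:ℝ)/625) := by
            rw [hβdef, hpval, hlam]
            have h2 : (1:ℝ) - 256/625 = (738/625)/2 := by norm_num
            rw [h2, Real.log_div (by norm_num) (by norm_num)]
            ring
          have hβlo : lam - 113/625 ≤ β := by rw [hβeq]; linarith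
          have hβhi : β ≤ lam - 113/738 := by rw [hβeq]; linarith
          have hc33 : 33 ≤ c := by
            by_contra hcon
            push_neg at hcon
            have hcr : (c:ℝ) ≤ 32 := by exact_mod_cast (by omega : c ≤ 32)
            have := htriv
            push_cast at this
            nlinarith [hlogb1]
          have hx5 : 5*lam ≤ x := by
            have := hxge 5 (by omega)
            push_cast at this
            linarith
          have k1 : x*(8*β - 5*lam) ≥ x*(3*lam - 904/625) := by
            apply mul_le_mul_of_nonneg_left _ (le_of_lt hxpos)
            linarith
          have k2 : x*(3*lam - 904/625) ≥ (5*lam)*(3*lam - 904/625) := by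
            apply mul_le_mul_of_nonneg_right hx5
            nlinarith [hlam_lo]
          have k3 : (5*lam)*(3*lam - 904/625) ≥ lam*(2*lam - 113/738) := by
            nlinarith [hlam_lo]
          have k4 : lam*(β+lam) ≤ lam*(2*lam - 113/738) := by
            apply mul_le_mul_of_nonneg_left _ (le_of_lt hlog2pos')
            linarith
          push_cast
          linarith only [k1, k2, k3, k4]
      · -- d ≥ 5
        have hd5R : (5:ℝ) ≤ (d:ℝ) := by exact_mod_cast hd5
        have hdpos : (0:ℝ) < (d:ℝ) := by linarith
        -- p ≥ exp (-1)
        have hpe : Real.exp (-1) ≤ p := by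
          have hA : (1 + 1/(d:ℝ))^d ≤ Real.exp 1 := by
            have h1 : (1:ℝ) + 1/(d:ℝ) ≤ Real.exp (1/(d:ℝ)) := by
              have := Real.add_one_le_exp (1/(d:ℝ))
              linarith
            have h2 : ((1:ℝ) + 1/(d:ℝ))^d ≤ (Real.exp (1/(d:ℝ)))^d :=
              pow_le_pow_left₀ (by positivity) h1 d
            have h3 : (Real.exp (1/(d:ℝ)))^d = Real.exp 1 := by
              rw [← Real.exp_nat_mul]
              congr 1
              field_simp
            rw [h3] at h2
            exact h2
          have hinv : p * (1 + 1/(d:ℝ))^d = 1 := by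
            rw [hpdef, ← mul_pow]
            have hone : ((d:ℝ)/((d:ℝ)+1)) * (1 + 1/(d:ℝ)) = 1 := by
              field_simp
            rw [hone, one_pow]
          have hprod : Real.exp (-1) * Real.exp 1 = 1 := by
            rw [← Real.exp_add]
            norm_num
          have h1 : (1:ℝ) ≤ p * Real.exp 1 := by
            calc (1:ℝ) = p * (1 + 1/(d:ℝ))^d := hinv.symm
              _ ≤ p * Real.exp 1 := mul_le_mul_of_nonneg_left hA (le_of_lt hp_pos0)
          calc Real.exp (-1) = Real.exp (-1) * 1 := by ring
            _ ≤ Real.exp (-1) * (p * Real.exp 1) :=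
                mul_le_mul_of_nonneg_left h1 (le_of_lt (Real.exp_pos _))
            _ = p * (Real.exp (-1) * Real.exp 1) := by ring
            _ = p * 1 := by rw [hprod]
            _ = p := by ring
        have hq : (147:ℝ)/400 ≤ p := by
          have h1 : (147:ℝ)/400 ≤ Real.exp (-1) := by
            rw [Real.exp_neg]
            have h2 : Real.exp 1 ≤ 2.7182818286 := le_of_lt Real.exp_one_lt_d9
            have h3 : (2.7182818286:ℝ)⁻¹ ≤ (Real.exp 1)⁻¹ := by
              apply inv_anti₀ (Real.exp_pos 1) h2
            have h4 : (147:ℝ)/400 ≤ (2.7182818286:ℝ)⁻¹ := by norm_num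
            linarith
          linarith [hpe]
        have hβlo : lam - 1/4 ≤ β := by
          have h1 : (1:ℝ) - p ≤ 253/400 := by linarith
          have h2 : Real.log (1-p) ≤ Real.log ((253:ℝ)/400) :=
            Real.log_le_log h1p_pos h1
          have h3 : Real.log ((253:ℝ)/400) = Real.log ((253:ℝ)/200) - lam := by
            rw [hlam]
            have h4 : (253:ℝ)/400 = (253/200)/2 := by norm_num
            rw [h4, Real.log_div (by norm_num) (by norm_num)]
          have h5 : Real.log ((253:ℝ)/200) ≤ 1/4 := by
            have h6 : Real.log ((253:ℝ)/200) ≤ Real.log ((81:ℝ)/64) := by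
              apply Real.log_le_log (by norm_num) (by norm_num)
            have h7 : Real.log ((81:ℝ)/64) = 2 * Real.log ((9:ℝ)/8) := by
              rw [show (81:ℝ)/64 = (9/8)^2 by norm_num, Real.log_pow]
              norm_num
            have h8 : Real.log ((9:ℝ)/8) ≤ 1/8 := by
              have := Real.log_le_sub_one_of_pos (show (0:ℝ) < 9/8 by norm_num)
              linarith
            linarith
          rw [hβdef]
          linarith
        have hc129 : 129 ≤ c := by
          by_contra hcon
          push_neg at hcon
          have hc128 : c ≤ 128 := by omega
          have h60 : (60:ℝ) ≤ 2*(d:ℝ)*((d:ℝ)+1) := by nlinarith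
          have hcle : (c:ℝ) ≤ 2*(d:ℝ)*((d:ℝ)+1)*Real.logb 2 (c:ℝ) := by
            rcases le_or_gt c 60 with h60' | h60'
            · have hcr : (c:ℝ) ≤ 60 := by exact_mod_cast h60'
              nlinarith [hlogb1]
            · have hlb := hlogb_ge 5 1 (by
                calc 2^5 ≤ 61^1 := by norm_num
                  _ ≤ c^1 := Nat.pow_le_pow_left (by omega) 1)
              have hcr : (c:ℝ) ≤ 128 := by exact_mod_cast hc128
              push_cast at hlb
              nlinarith [hlb, hlogb1]
          linarith [htriv, hcle]
        have hx7 : 7*lam ≤ x := by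
          have := hxge 7 (by omega)
          push_cast at this
          linarith
        have k1 : 2*(d:ℝ)*x*β ≥ 2*(d:ℝ)*x*(lam - 1/4) := by
          apply mul_le_mul_of_nonneg_left hβlo
          positivity
        have k2 : (d:ℝ)*(x*(lam - 1/2)) ≥ 5*(x*(lam - 1/2)) := by
          apply mul_le_mul_of_nonneg_right hd5R
          have : (0:ℝ) < lam - 1/2 := by linarith
          positivity
        have k3 : x*(4*lam - 5/2) ≥ (7*lam)*(4*lam - 5/2) := by
          apply mul_le_mul_of_nonneg_right hx7
          nlinarith [hlam_lo]
        have k4 : lam*β + lam*lam ≤ lam + lam*lam := by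
          nlinarith [hβ_le_one, hlog2pos']
        have k5 : 27*lam*lam - (37/2)*lam ≥ 0 := by nlinarith [hlam_lo]
        push_cast
        linarith only [k1, k2, k3, k4, k5]
    have hfin : lam*(lam + ((d:ℝ)+1)*x) < lam*((t:ℝ)*β) := by
      have hstep : (2*(d:ℝ)*x - lam)*β < lam*((t:ℝ)*β) := by
        nlinarith [mul_pos (show (0:ℝ) < lam*((t:ℝ)+1) - 2*(d:ℝ)*x by linarith) hβ_pos]
      linarith [hmain]
    exact lt_of_mul_lt_mul_left hfin (le_of_lt hlog2pos')
  have hRle : ((Finset.univ.filter (fun aS : Fin c × Finset (Fin c) =>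
        aS.2.card ≤ d ∧ aS.1 ∉ aS.2)).card : ℝ) ≤ 2*(c:ℝ)^(d+1) := by
    have h0 := R_card_le c d hc2
    calc ((Finset.univ.filter (fun aS : Fin c × Finset (Fin c) =>
        aS.2.card ≤ d ∧ aS.1 ∉ aS.2)).card : ℝ) ≤ ((2 * c^(d+1) : ℕ) : ℝ) := by
          exact_mod_cast h0
      _ = 2*(c:ℝ)^(d+1) := by push_cast; ring
  have hcpos : (0:ℝ) < (c:ℝ) := by linarith
  have hpow : ((1 - p)^t : ℝ) < Real.exp (-(lam + ((d:ℝ)+1)*x)) := by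
    have h1 : (1-p)^t = Real.exp ((t:ℝ) * Real.log (1-p)) := by
      rw [Real.exp_nat_mul, Real.exp_log h1p_pos]
    rw [h1]
    apply Real.exp_lt_exp.mpr
    have hlog1p : Real.log (1-p) = -β := by rw [hβdef]; ring
    rw [hlog1p]
    nlinarith [hkey]
  have hexp_eq : Real.exp (-(lam + ((d:ℝ)+1)*x)) = 1/(2*(c:ℝ)^(d+1)) := by
    rw [Real.exp_neg, Real.exp_add]
    rw [hlam, Real.exp_log (by norm_num : (0:ℝ) < 2)]
    have hthis : Real.exp (((d:ℝ)+1)*x) = (c:ℝ)^(d+1) := by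
      rw [hx]
      rw [show ((d:ℝ)+1) = ((d+1 : ℕ):ℝ) by push_cast; ring]
      rw [Real.exp_nat_mul, Real.exp_log hcpos]
    rw [hthis, one_div]
  have hnum : ((Finset.univ.filter (fun aS : Fin c × Finset (Fin c) =>
        aS.2.card ≤ d ∧ aS.1 ∉ aS.2)).card : ℝ) * (1 - p)^t < 1 := by
    have h0 : (0:ℝ) ≤ (1-p)^t := by positivity
    have hbig : (0:ℝ) < 2*(c:ℝ)^(d+1) := by positivity
    calc ((Finset.univ.filter (fun aS : Fin c × Finset (Fin c) =>
        aS.2.card ≤ d ∧ aS.1 ∉ aS.2)).card : ℝ) * (1-p)^t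
        ≤ 2*(c:ℝ)^(d+1) * (1-p)^t := mul_le_mul_of_nonneg_right hRle h0
      _ < 2*(c:ℝ)^(d+1) * (1/(2*(c:ℝ)^(d+1))) := by
          apply mul_lt_mul_of_pos_left _ hbig
          rw [← hexp_eq]
          exact hpow
      _ = 1 := by field_simp
  obtain ⟨g, hg⟩ := exists_good_family c d t (by rw [← hpdef]; exact hnum)
  have hgood : ∀ v : V, ∃ rr : Fin t, ∀ s ∈ Sv v, g rr s ≠ g rr (av v) :=
    fun v => hg (av v) (Sv v) (haS v) (hSvcard v)
  choose r hr using hgood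
  have hcol : G.Colorable (t*(d+1)) := by
    have C : G.Coloring (Fin t × Fin (d+1)) := SimpleGraph.Coloring.mk
      (fun v => (r v, g (r v) (av v)))
      (by
        intro u v hA heq
        rw [Prod.mk.injEq] at heq
        obtain ⟨h1, h2⟩ := heq
        have h3 : g (r u) (av v) = g (r u) (av u) := by rw [h1, ← h2, h1]
        exact hr u (av v) (hadjS u v hA) h3)
    have h4 := C.colorable
    simpa [Fintype.card_prod] using h4
  apply key (t*(d+1)) hcol
  have hfin : (t:ℝ)*((d:ℝ)+1) ≤ 2*(d:ℝ)*Real.logb 2 c*((d:ℝ)+1) := by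
    apply mul_le_mul_of_nonneg_right ht_le (by positivity)
  push_cast
  calc ((t:ℝ))*((d:ℝ)+1) ≤ 2*(d:ℝ)*Real.logb 2 c*((d:ℝ)+1) := hfin
    _ = 2*(d:ℝ)*((d:ℝ)+1)*Real.logb 2 c := by ring
end

section
/- For all integers c ≥ 2 and d ≥ 1, setting t = 2d and M = ⌈(d+1)·log₂ c⌉, there exists a family ℋ = {h_1,…,h_M} of functions from [c] = {1,…,c} to [t] such that for every subset S ⊆ [c] with |S| ≤ d and every i ∈ [c] ∖ S, there exists j ∈ [M] with h_j(i) ∉ {h_j(i') : i' ∈ S}. -/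
open Finset in
theorem sep_key (c d M : ℕ) (hc : 2 ≤ c) (hd : 1 ≤ d) (hM : 1 ≤ M)
    (hcd : c ^ (d + 1) ≤ 2 ^ M) :
    ∃ h : Fin M → Fin c → Fin (2 * d),
      ∀ S : Finset (Fin c), S.card ≤ d → ∀ i : Fin c, i ∉ S →
        ∃ j, ∀ i' ∈ S, h j i ≠ h j i' := by
  classical
  set Pairs : Finset (Finset (Fin c) × Fin c) :=
    Finset.univ.filter (fun p => p.1.Nonempty ∧ p.1.card ≤ d ∧ p.2 ∉ p.1) with hPairs
  set Fail : Finset (Fin c) × Fin c → (Fin M → Fin c → Fin (2*d)) → Prop :=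
    fun p h => ∀ j, ∃ i' ∈ p.1, h j p.2 = h j i' with hFail
  -- count of pairs
  have stepP : Pairs.card < c ^ (d + 1) := by
    have hdec : ∀ p ∈ Pairs,
        (Finset.image (fun m : Fin d => (p.1.sort (· ≤ ·)).getD m p.2) Finset.univ).erase p.2
          = p.1 := by
      intro p hp
      simp only [hPairs, Finset.mem_filter] at hp
      obtain ⟨-, hne, hcard, hni⟩ := hp
      ext x
      simp only [Finset.mem_erase, Finset.mem_image, Finset.mem_univ, true_and]
      constructor
      · rintro ⟨hx, m, rfl⟩
        by_cases hm : (m : ℕ) < (p.1.sort (· ≤ ·)).length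
        · rw [List.getD_eq_getElem _ _ hm]
          have := List.getElem_mem hm
          rwa [Finset.mem_sort] at this
        · exact absurd (List.getD_eq_default _ _ (le_of_not_gt hm)) hx
      · intro hx
        have hxi : x ≠ p.2 := fun h => hni (h ▸ hx)
        have hmem : x ∈ p.1.sort (· ≤ ·) := (Finset.mem_sort _).mpr hx
        obtain ⟨k, hk, hkx⟩ := List.mem_iff_getElem.mp hmem
        have hlen : (p.1.sort (· ≤ ·)).length = p.1.card := Finset.length_sort _
        have hkd : k < d := by omega
        refine ⟨hxi, ⟨k, hkd⟩, ?_⟩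
        rw [List.getD_eq_getElem _ _ (by simpa using hk)]
        exact hkx
    set enc : Finset (Fin c) × Fin c → Fin c × (Fin d → Fin c) :=
      fun p => (p.2, fun m : Fin d => (p.1.sort (· ≤ ·)).getD m p.2) with henc
    have hinj : Set.InjOn enc Pairs := by
      intro p hp q hq heq
      have h2 : p.2 = q.2 := congrArg Prod.fst heq
      have hsnd := congrArg Prod.snd heq
      simp only [henc] at hsnd
      have h1 : p.1 = q.1 := by
        rw [← hdec p hp, ← hdec q hq, hsnd, h2]
      exact Prod.ext h1 h2
    set T : Finset (Fin c × (Fin d → Fin c)) :=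
      Finset.univ.filter (fun q : Fin c × (Fin d → Fin c) => ∃ m, q.2 m ≠ q.1) with hT
    have hrange : ∀ p ∈ Pairs, enc p ∈ T := by
      intro p hp
      simp only [hPairs, Finset.mem_filter] at hp
      obtain ⟨-, hne, hcard, hni⟩ := hp
      simp only [hT, henc, Finset.mem_filter, Finset.mem_univ, true_and]
      refine ⟨⟨0, hd⟩, ?_⟩
      have hlen : (p.1.sort (· ≤ ·)).length = p.1.card := Finset.length_sort _
      have h0 : (0 : ℕ) < (p.1.sort (· ≤ ·)).length := by
        rw [hlen]; exact Finset.card_pos.mpr hne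
      rw [List.getD_eq_getElem _ _ (by simpa using h0)]
      intro hcontra
      apply hni
      rw [← hcontra]
      have := List.getElem_mem (by simpa using h0 :
        (0:ℕ) < (p.1.sort (· ≤ ·)).length)
      rwa [Finset.mem_sort] at this
    have hx0 : (⟨0, by omega⟩ : Fin c) = ⟨0, by omega⟩ := rfl
    have hTlt : T.card < Fintype.card (Fin c × (Fin d → Fin c)) := by
      rw [← Finset.card_univ]
      refine Finset.card_lt_card ?_
      rw [Finset.ssubset_iff_of_subset (Finset.filter_subset _ _)]
      refine ⟨(⟨0, by omega⟩, fun _ => ⟨0, by omega⟩), Finset.mem_univ _, ?_⟩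
      simp [hT]
    have hcardT : Fintype.card (Fin c × (Fin d → Fin c)) = c ^ (d + 1) := by
      simp [pow_succ, mul_comm]
    calc Pairs.card ≤ T.card := Finset.card_le_card_of_injOn enc hrange hinj
      _ < c ^ (d + 1) := hcardT ▸ hTlt
  -- per-coordinate count
  have step1 : ∀ p ∈ Pairs,
      (Finset.univ.filter (fun g : Fin c → Fin (2*d) => ∃ i' ∈ p.1, g p.2 = g i')).card
        ≤ d * (2*d) ^ (c-1) := by
    intro p hp
    simp only [hPairs, Finset.mem_filter] at hp
    obtain ⟨-, hne, hcard, hni⟩ := hp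
    set f : (Fin c → Fin (2*d)) → Fin c × ({x : Fin c // x ≠ p.2} → Fin (2*d)) :=
      fun g => (if hg : ∃ i' ∈ p.1, g p.2 = g i' then hg.choose else p.2,
        fun x => g x.val) with hf
    have hmaps : ∀ g ∈ Finset.univ.filter (fun g : Fin c → Fin (2*d) => ∃ i' ∈ p.1, g p.2 = g i'),
        f g ∈ p.1 ×ˢ (Finset.univ : Finset ({x : Fin c // x ≠ p.2} → Fin (2*d))) := by
      intro g hg
      simp only [Finset.mem_filter, Finset.mem_univ, true_and] at hg
      simp only [hf, Finset.mem_product, Finset.mem_univ, and_true, dif_pos hg]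
      exact hg.choose_spec.1
    have hinj : Set.InjOn f ↑(Finset.univ.filter
        (fun g : Fin c → Fin (2*d) => ∃ i' ∈ p.1, g p.2 = g i')) := by
      intro g hg g' hg' heq
      simp only [Finset.coe_filter, Set.mem_setOf_eq] at hg hg'
      obtain ⟨-, hQ⟩ := hg
      obtain ⟨-, hQ'⟩ := hg'
      have h1 := congrArg Prod.fst heq
      have h2 := congrArg Prod.snd heq
      simp only [hf, dif_pos hQ, dif_pos hQ'] at h1 h2
      have hch : hQ.choose = hQ'.choose := h1
      have hoff : ∀ x : Fin c, x ≠ p.2 → g x = g' x := by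
        intro x hx
        exact congrFun h2 ⟨x, hx⟩
      funext x
      by_cases hx : x = p.2
      · have hc0 : hQ.choose ∈ p.1 := hQ.choose_spec.1
        have hne0 : hQ.choose ≠ p.2 := fun h => hni (h ▸ hc0)
        rw [hx, hQ.choose_spec.2, hoff _ hne0, hch, ← hQ'.choose_spec.2]
      · exact hoff x hx
    have hsub : Fintype.card {x : Fin c // x ≠ p.2} = c - 1 := by
      simp [Fintype.card_subtype_compl]
    calc (Finset.univ.filter (fun g : Fin c → Fin (2*d) => ∃ i' ∈ p.1, g p.2 = g i')).card
        ≤ (p.1 ×ˢ (Finset.univ : Finset ({x : Fin c // x ≠ p.2} → Fin (2*d)))).card :=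
          Finset.card_le_card_of_injOn f hmaps hinj
      _ = p.1.card * (2*d) ^ (c-1) := by
          rw [Finset.card_product, Finset.card_univ, Fintype.card_fun, Fintype.card_fin, hsub]
      _ ≤ d * (2*d) ^ (c-1) := Nat.mul_le_mul_right _ hcard
  -- per-pair count
  have step2 : ∀ p ∈ Pairs,
      (Finset.univ.filter (Fail p)).card ≤ (d * (2*d) ^ (c-1)) ^ M := by
    intro p hp
    calc (Finset.univ.filter (Fail p)).card
        = Fintype.card {h : Fin M → Fin c → Fin (2*d) // Fail p h} :=
          (Fintype.card_subtype _).symm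
      _ = Fintype.card (∀ _j : Fin M,
            {g : Fin c → Fin (2*d) // ∃ i' ∈ p.1, g p.2 = g i'}) :=
          Fintype.card_congr (Equiv.subtypePiEquivPi
            (p := fun (_ : Fin M) (g : Fin c → Fin (2*d)) => ∃ i' ∈ p.1, g p.2 = g i'))
      _ = (Fintype.card {g : Fin c → Fin (2*d) // ∃ i' ∈ p.1, g p.2 = g i'}) ^ M := by
          rw [Fintype.card_pi, Finset.prod_const, Finset.card_univ, Fintype.card_fin]
      _ = (Finset.univ.filter
            (fun g : Fin c → Fin (2*d) => ∃ i' ∈ p.1, g p.2 = g i')).card ^ M := by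
          rw [Fintype.card_subtype]
      _ ≤ (d * (2*d) ^ (c-1)) ^ M := Nat.pow_le_pow_left (step1 p hp) M
  -- total count
  have total : (Finset.univ.filter
      (fun h : Fin M → Fin c → Fin (2*d) => ∃ p ∈ Pairs, Fail p h)).card
        < (Finset.univ : Finset (Fin M → Fin c → Fin (2*d))).card := by
    have hsub : (Finset.univ.filter
        (fun h : Fin M → Fin c → Fin (2*d) => ∃ p ∈ Pairs, Fail p h))
        ⊆ Pairs.biUnion (fun p => Finset.univ.filter (Fail p)) := by
      intro h hh
      simp only [Finset.mem_filter, Finset.mem_biUnion] at hh ⊢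
      obtain ⟨-, p, hp, hfp⟩ := hh
      exact ⟨p, hp, Finset.mem_univ _, hfp⟩
    calc _ ≤ (Pairs.biUnion (fun p => Finset.univ.filter (Fail p))).card :=
            Finset.card_le_card hsub
      _ ≤ ∑ p ∈ Pairs, (Finset.univ.filter (Fail p)).card := Finset.card_biUnion_le
      _ ≤ ∑ _p ∈ Pairs, (d * (2*d) ^ (c-1)) ^ M := Finset.sum_le_sum step2
      _ = Pairs.card * (d * (2*d) ^ (c-1)) ^ M := by rw [Finset.sum_const, smul_eq_mul]
      _ < c ^ (d+1) * (d * (2*d) ^ (c-1)) ^ M := by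
            have hpos : 0 < (d * (2*d) ^ (c-1)) ^ M :=
              pow_pos (Nat.mul_pos hd (pow_pos (by omega) _)) _
            exact (Nat.mul_lt_mul_right hpos).mpr stepP
      _ ≤ 2 ^ M * (d * (2*d) ^ (c-1)) ^ M := Nat.mul_le_mul_right _ hcd
      _ = ((2*d) ^ c) ^ M := by
            have h1 : 2 * (d * (2*d) ^ (c-1)) = (2*d) ^ c := by
              conv_rhs => rw [show c = (c-1)+1 by omega]
              rw [pow_succ]; ring
            rw [← Nat.mul_pow, h1]
      _ = (Finset.univ : Finset (Fin M → Fin c → Fin (2*d))).card := by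
            rw [Finset.card_univ, Fintype.card_fun, Fintype.card_fun,
              Fintype.card_fin, Fintype.card_fin, Fintype.card_fin]
  obtain ⟨h, hh⟩ : ∃ h : Fin M → Fin c → Fin (2*d), ¬ ∃ p ∈ Pairs, Fail p h := by
    by_contra hco
    push_neg at hco
    have : (Finset.univ.filter
        (fun h : Fin M → Fin c → Fin (2*d) => ∃ p ∈ Pairs, Fail p h)) = Finset.univ := by
      apply Finset.eq_univ_iff_forall.mpr
      intro h
      simp only [Finset.mem_filter, Finset.mem_univ, true_and]
      exact hco h
    rw [this] at total
    exact lt_irrefl _ total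
  refine ⟨h, fun S hS i hi => ?_⟩
  rcases S.eq_empty_or_nonempty with rfl | hne
  · exact ⟨⟨0, hM⟩, by simp⟩
  · have hp : (S, i) ∈ Pairs := by
      simp [hPairs, hne, hS, hi]
    push_neg at hh
    have := hh (S, i) hp
    simp only [hFail] at this
    push_neg at this
    exact this


/-- For all integers `c ≥ 2` and `d ≥ 1`, with `t = 2d` and
`M = ⌈(d+1)·log₂ c⌉`, there is a family `h₁,…,h_M` of functions `[c] → [t]`
such that for every `S ⊆ [c]` with `|S| ≤ d` and every `i ∈ [c] ∖ S`, some
`h_j` separates `i` from `S`, i.e. `h_j(i) ∉ {h_j(i') : i' ∈ S}`. -/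
theorem exists_separating_hash_family (c d : ℕ) (hc : 2 ≤ c) (hd : 1 ≤ d) :
    ∃ h : Fin ⌈((d : ℝ) + 1) * Real.logb 2 c⌉₊ → Fin c → Fin (2 * d),
      ∀ S : Finset (Fin c), S.card ≤ d → ∀ i : Fin c, i ∉ S →
        ∃ j, ∀ i' ∈ S, h j i ≠ h j i' := by
  set M := ⌈((d : ℝ) + 1) * Real.logb 2 c⌉₊ with hMdef
  have hc1 : (1 : ℝ) < (c : ℝ) := by exact_mod_cast (by omega : 1 < c)
  have hlogpos : 0 < Real.logb 2 (c : ℝ) := Real.logb_pos (by norm_num) hc1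
  have hprodpos : 0 < ((d : ℝ) + 1) * Real.logb 2 c :=
    mul_pos (by positivity) hlogpos
  have hM : 1 ≤ M := Nat.one_le_ceil_iff.mpr hprodpos
  have hcd : c ^ (d + 1) ≤ 2 ^ M := by
    have hcR : ((c : ℝ)) ^ (d + 1) ≤ (2 : ℝ) ^ M := by
      have h1 : (2 : ℝ) ^ Real.logb 2 (c : ℝ) = (c : ℝ) :=
        Real.rpow_logb (by norm_num) (by norm_num) (by positivity)
      have h2 : ((c : ℝ)) ^ (d + 1)
          = (2 : ℝ) ^ (((d : ℝ) + 1) * Real.logb 2 (c : ℝ)) := by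
        conv_lhs => rw [← h1]
        rw [← Real.rpow_natCast ((2:ℝ) ^ Real.logb 2 (c:ℝ)) (d+1),
          ← Real.rpow_mul (by norm_num)]
        congr 1
        push_cast
        ring
      have h3 : (2 : ℝ) ^ (((d : ℝ) + 1) * Real.logb 2 (c : ℝ)) ≤ (2 : ℝ) ^ (M : ℝ) :=
        Real.rpow_le_rpow_of_exponent_le (by norm_num) (Nat.le_ceil _)
      rw [h2]
      calc (2 : ℝ) ^ (((d : ℝ) + 1) * Real.logb 2 (c : ℝ)) ≤ (2 : ℝ) ^ (M : ℝ) := h3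
        _ = (2 : ℝ) ^ M := by rw [Real.rpow_natCast]
    exact_mod_cast hcR
  exact sep_key c d M hc hd hM hcd
end

section
/- For all integers ℓ ≥ 1 and N ≥ 2, there exists an (N,ℓ)-isolating family of size at most ⌈2^ℓ · log₂ N⌉: a family ℋ of at most ⌈2^ℓ · log₂ N⌉ functions from [N] = {1,…,N} to {0,1}^ℓ such that for every subset S ⊆ [N] with |S| ≤ 2^{ℓ−1} and every m ∈ [N] ∖ S, there exists h ∈ ℋ with h(m) ∉ {h(m') : m' ∈ S}. -/
lemma iso_numeric (ℓ N : ℕ) (hℓ : 1 ≤ ℓ) (hN : 2 ≤ N) :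
    N ^ (2 ^ (ℓ - 1) + 1) ≤ 2 ^ (⌈(2 : ℝ) ^ ℓ * Real.logb 2 N⌉₊) := by
  have hN1 : (1 : ℝ) ≤ (N : ℝ) := by exact_mod_cast Nat.one_le_iff_ne_zero.mpr (by omega)
  have hNpos : (0 : ℝ) < N := by linarith
  set M := ⌈(2 : ℝ) ^ ℓ * Real.logb 2 N⌉₊ with hM
  have h1 : (2 : ℝ) ^ ℓ * Real.logb 2 N ≤ (M : ℝ) := Nat.le_ceil _
  have h2 : ((N : ℝ)) ^ ((2 : ℝ) ^ ℓ * 1) ≤ (2 : ℝ) ^ (M : ℝ) := by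
    calc ((N : ℝ)) ^ ((2 : ℝ) ^ ℓ * 1)
        = ((2 : ℝ) ^ (Real.logb 2 N)) ^ ((2 : ℝ) ^ ℓ * 1) := by
          rw [Real.rpow_logb (by norm_num) (by norm_num) hNpos]
      _ = (2 : ℝ) ^ ((2 : ℝ) ^ ℓ * Real.logb 2 N) := by
          rw [← Real.rpow_natCast (2:ℝ) ℓ, ← Real.rpow_mul (by norm_num)]
          ring_nf
      _ ≤ (2 : ℝ) ^ (M : ℝ) := Real.rpow_le_rpow_of_exponent_le (by norm_num) h1
  have hexpnat : 2 ^ (ℓ - 1) + 1 ≤ 2 ^ ℓ := by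
    have h4 : 2 ^ ℓ = 2 ^ (ℓ - 1) * 2 := by
      rw [← pow_succ]; congr 1; omega
    have h5 : 1 ≤ 2 ^ (ℓ - 1) := Nat.one_le_two_pow
    omega
  have hexp : ((2 ^ (ℓ - 1) + 1 : ℕ) : ℝ) ≤ (2 : ℝ) ^ ℓ * 1 := by
    rw [mul_one]
    calc ((2 ^ (ℓ - 1) + 1 : ℕ) : ℝ) ≤ ((2 ^ ℓ : ℕ) : ℝ) := by exact_mod_cast hexpnat
      _ = (2 : ℝ) ^ ℓ := by push_cast; ring
  have h3 : ((N : ℝ)) ^ (((2 ^ (ℓ - 1) + 1 : ℕ)) : ℝ) ≤ ((N : ℝ)) ^ ((2 : ℝ) ^ ℓ * 1) :=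
    Real.rpow_le_rpow_of_exponent_le hN1 hexp
  rw [Real.rpow_natCast] at h3
  rw [Real.rpow_natCast] at h2
  exact_mod_cast h3.trans h2

open Finset

def isoEnc (N k : ℕ) (p : Finset (Fin N) × Fin N) (i : Fin (k + 1)) : Fin N :=
  (p.1.sort (· ≤ ·)).getD i p.2

lemma iso_pairs_count (N k : ℕ) (hN : 2 ≤ N) :
    ((Finset.univ : Finset (Finset (Fin N) × Fin N)).filter
      (fun p => p.1.Nonempty ∧ p.1.card ≤ k ∧ p.2 ∉ p.1)).card < N ^ (k + 1) := by
  classical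
  have henc : ∀ (p : Finset (Fin N) × Fin N) (i : Fin (k + 1)),
      isoEnc N k p i = (p.1.sort (· ≤ ·)).getD i p.2 := fun _ _ => rfl
  -- basic facts about enc on valid pairs
  have hlen : ∀ p : Finset (Fin N) × Fin N, (p.1.sort (· ≤ ·)).length = p.1.card :=
    fun p => Finset.length_sort _
  have hlast : ∀ p : Finset (Fin N) × Fin N, p.1.card ≤ k → isoEnc N k p (Fin.last k) = p.2 := by
    intro p hcard
    have : (p.1.sort (· ≤ ·)).length ≤ (Fin.last k : Fin (k+1)).1 := by
      rw [hlen]; simpa using hcard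
    rw [henc]
    exact List.getD_eq_default _ _ this
  have himage : ∀ p : Finset (Fin N) × Fin N, p.1.card ≤ k →
      Finset.image (isoEnc N k p) Finset.univ = insert p.2 p.1 := by
    intro p hcard
    ext x
    simp only [Finset.mem_image, Finset.mem_univ, true_and, Finset.mem_insert]
    constructor
    · rintro ⟨i, rfl⟩
      by_cases hi : (i : ℕ) < (p.1.sort (· ≤ ·)).length
      · right
        rw [henc, List.getD_eq_getElem _ _ hi]
        have := List.getElem_mem hi
        rwa [Finset.mem_sort] at this
      · left
        rw [henc, List.getD_eq_default _ _ (Nat.le_of_not_lt hi)]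
    · rintro (rfl | hx)
      · exact ⟨Fin.last k, hlast p hcard⟩
      · have hx' : x ∈ p.1.sort (· ≤ ·) := (Finset.mem_sort _).mpr hx
        obtain ⟨j, hj, hjx⟩ := List.mem_iff_getElem.mp hx'
        have hjk : j < k + 1 := by
          have := hlen p; omega
        refine ⟨⟨j, hjk⟩, ?_⟩
        rw [henc, List.getD_eq_getElem _ _ (by simpa using hj)]
        simpa using hjx
  -- target : nonconstant functions
  let T : Finset (Fin (k + 1) → Fin N) :=
    Finset.univ.filter (fun g => ¬ ∀ i, g i = g (Fin.last k))
  have hT : T = Finset.univ.filter (fun g => ¬ ∀ i, g i = g (Fin.last k)) := rfl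
  have hmaps : ∀ p ∈ (Finset.univ : Finset (Finset (Fin N) × Fin N)).filter
      (fun p => p.1.Nonempty ∧ p.1.card ≤ k ∧ p.2 ∉ p.1), isoEnc N k p ∈ T := by
    intro p hp
    simp only [Finset.mem_filter, Finset.mem_univ, true_and] at hp
    obtain ⟨hne, hcard, hm⟩ := hp
    simp only [hT, Finset.mem_filter, Finset.mem_univ, true_and]
    intro hconst
    obtain ⟨x, hx⟩ := hne
    have hx' : x ∈ Finset.image (isoEnc N k p) Finset.univ := by
      rw [himage p hcard]; exact Finset.mem_insert_of_mem hx
    obtain ⟨i, _, hi⟩ := Finset.mem_image.mp hx'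
    have : x = p.2 := by rw [← hi, hconst i, hlast p hcard]
    exact hm (this ▸ hx)
  have hinj : Set.InjOn (isoEnc N k) ((Finset.univ : Finset (Finset (Fin N) × Fin N)).filter
      (fun p => p.1.Nonempty ∧ p.1.card ≤ k ∧ p.2 ∉ p.1)) := by
    intro p hp q hq hpq
    simp only [Finset.coe_filter, Set.mem_setOf_eq] at hp hq
    obtain ⟨_, hpc, hpm⟩ := hp.2
    obtain ⟨_, hqc, hqm⟩ := hq.2
    have h2 : p.2 = q.2 := by rw [← hlast p hpc, ← hlast q hqc, hpq]
    have h1 : p.1 = q.1 := by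
      have himg : insert p.2 p.1 = insert q.2 q.1 := by
        rw [← himage p hpc, ← himage q hqc, hpq]
      calc p.1 = (insert p.2 p.1).erase p.2 := (Finset.erase_insert hpm).symm
        _ = (insert q.2 q.1).erase q.2 := by rw [himg, h2]
        _ = q.1 := Finset.erase_insert hqm
    exact Prod.ext h1 h2
  have hle : ((Finset.univ : Finset (Finset (Fin N) × Fin N)).filter
      (fun p => p.1.Nonempty ∧ p.1.card ≤ k ∧ p.2 ∉ p.1)).card ≤ T.card :=
    Finset.card_le_card_of_injOn (isoEnc N k) hmaps hinj
  -- card of T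
  have hC : (Finset.univ.filter (fun g : Fin (k + 1) → Fin N => ∀ i, g i = g (Fin.last k)))
      = Finset.image (fun c => Function.const (Fin (k + 1)) c) Finset.univ := by
    ext g
    simp only [Finset.mem_filter, Finset.mem_univ, true_and, Finset.mem_image]
    constructor
    · intro hg
      exact ⟨g (Fin.last k), by funext i; exact (hg i).symm⟩
    · rintro ⟨c, rfl⟩
      intro i; rfl
  have hCcard : (Finset.univ.filter
      (fun g : Fin (k + 1) → Fin N => ∀ i, g i = g (Fin.last k))).card = N := by
    rw [hC, Finset.card_image_of_injective _ (fun a b h => congrFun h (Fin.last k))]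
    simp
  have huniv : (Finset.univ : Finset (Fin (k + 1) → Fin N)).card = N ^ (k + 1) := by
    simp [Fintype.card_fun]
  have hTcard : T.card = N ^ (k + 1) - N := by
    rw [hT, Finset.filter_not, Finset.card_sdiff_of_subset (Finset.filter_subset _ _), hCcard, huniv]
  have hNle : N ≤ N ^ (k + 1) := Nat.le_self_pow (Nat.succ_ne_zero k) N
  have hNpos : 0 < N := lt_of_lt_of_le (by norm_num) hN
  calc ((Finset.univ : Finset (Finset (Fin N) × Fin N)).filter
      (fun p => p.1.Nonempty ∧ p.1.card ≤ k ∧ p.2 ∉ p.1)).card ≤ N ^ (k + 1) - N := by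
        rw [← hTcard]; exact hle
    _ < N ^ (k + 1) := by clear * - hNle hNpos; omega

-- counting for a single pair: functions with g m = g m'
lemma iso_pair_count (ℓ N : ℕ) (m m' : Fin N) (hmm : m' ≠ m) :
    ((Finset.univ : Finset (Fin N → (Fin ℓ → Bool))).filter
      (fun g => g m = g m')).card ≤ 2 ^ (ℓ * (N - 1)) := by
  classical
  have hcard : Fintype.card ({x : Fin N // x ≠ m} → (Fin ℓ → Bool)) = 2 ^ (ℓ * (N - 1)) := by
    rw [Fintype.card_fun]
    have : Fintype.card {x : Fin N // x ≠ m} = N - 1 := by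
      simp [Fintype.card_subtype_compl]
    rw [this]
    simp [Fintype.card_fun, ← pow_mul, Nat.mul_comm]
  calc ((Finset.univ : Finset (Fin N → (Fin ℓ → Bool))).filter (fun g => g m = g m')).card
      ≤ (Finset.univ : Finset ({x : Fin N // x ≠ m} → (Fin ℓ → Bool))).card := by
        apply Finset.card_le_card_of_injOn (fun g x => g x.1) (fun g _ => Finset.mem_univ _)
        intro g hg g' hg' hgg
        simp only [Finset.mem_coe, Finset.mem_filter] at hg hg'
        funext x
        by_cases hx : x = m
        · subst hx
          have e1 := congrFun hgg ⟨m', hmm⟩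
          simpa [hg.2, hg'.2] using e1
        · exact congrFun hgg ⟨x, hx⟩
    _ = 2 ^ (ℓ * (N - 1)) := by rw [Finset.card_univ, hcard]


/-- For all `ℓ ≥ 1` and `N ≥ 2`, there exists an
`(N,ℓ)`-isolating family of size at most `⌈2^ℓ · log₂ N⌉`: a family `ℋ` of at
most `⌈2^ℓ log₂ N⌉` functions `[N] → {0,1}^ℓ` such that for every `S ⊆ [N]`
with `|S| ≤ 2^{ℓ−1}` and every `m ∈ [N] ∖ S`, some `h ∈ ℋ` isolates `m` from
`S`, i.e. `h(m) ∉ {h(m') : m' ∈ S}`. -/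
theorem exists_isolating_family (ℓ N : ℕ) (hℓ : 1 ≤ ℓ) (hN : 2 ≤ N) :
    ∃ M : ℕ, M ≤ ⌈(2 : ℝ) ^ ℓ * Real.logb 2 N⌉₊ ∧
      ∃ h : Fin M → Fin N → (Fin ℓ → Bool),
        ∀ S : Finset (Fin N), S.card ≤ 2 ^ (ℓ - 1) → ∀ m : Fin N, m ∉ S →
          ∃ j, ∀ m' ∈ S, h j m ≠ h j m' := by
  classical
  refine ⟨⌈(2 : ℝ) ^ ℓ * Real.logb 2 N⌉₊, le_refl _, ?_⟩
  set M := ⌈(2 : ℝ) ^ ℓ * Real.logb 2 N⌉₊ with hMdef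
  have hM1 : 1 ≤ M := by
    rw [hMdef]
    rw [Nat.one_le_iff_ne_zero, ← Nat.pos_iff_ne_zero, Nat.ceil_pos]
    have h1 : (0 : ℝ) < Real.logb 2 N := Real.logb_pos (by norm_num)
      (by exact_mod_cast Nat.lt_of_lt_of_le (by norm_num) hN)
    positivity
  by_contra hcon
  push_neg at hcon
  -- the set of "bad certificate" pairs (S, m)
  set k := 2 ^ (ℓ - 1) with hk
  set P : Finset (Finset (Fin N) × Fin N) := (Finset.univ.filter
    (fun p => p.1.Nonempty ∧ p.1.card ≤ k ∧ p.2 ∉ p.1)) with hP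
  set B : Finset (Fin N) → Fin N → Finset (Fin N → (Fin ℓ → Bool)) :=
    fun S m => Finset.univ.filter (fun g => ∃ m' ∈ S, g m = g m') with hB
  set Bad : (Finset (Fin N) × Fin N) → Finset (Fin M → Fin N → (Fin ℓ → Bool)) :=
    fun p => Fintype.piFinset (fun _ => B p.1 p.2) with hBad
  -- every hash family is bad for some pair
  have hcover : (Finset.univ : Finset (Fin M → Fin N → (Fin ℓ → Bool)))
      ⊆ P.biUnion Bad := by
    intro h _
    obtain ⟨S, hScard, m, hmS, hbad⟩ := hcon h
    have hSne : S.Nonempty := by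
      obtain ⟨m', hm', _⟩ := hbad ⟨0, hM1⟩
      exact ⟨m', hm'⟩
    refine Finset.mem_biUnion.mpr ⟨(S, m), ?_, ?_⟩
    · rw [hP]
      simp only [Finset.mem_filter, Finset.mem_univ, true_and]
      exact ⟨hSne, hScard, hmS⟩
    · rw [hBad]
      refine Fintype.mem_piFinset.mpr (fun j => ?_)
      rw [hB]
      simp only [Finset.mem_filter, Finset.mem_univ, true_and]
      exact hbad j
  -- cardinality of each bad set
  have hBcard : ∀ S : Finset (Fin N), ∀ m : Fin N, S.card ≤ k → m ∉ S →
      (B S m).card ≤ 2 ^ (ℓ * N - 1) := by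
    intro S m hScard hmS
    have hsub : B S m ⊆ S.biUnion (fun m' =>
        Finset.univ.filter (fun g : Fin N → (Fin ℓ → Bool) => g m = g m')) := by
      intro g hg
      rw [hB] at hg
      simp only [Finset.mem_filter, Finset.mem_univ, true_and] at hg
      obtain ⟨m', hm', hgm⟩ := hg
      exact Finset.mem_biUnion.mpr ⟨m', hm', by
        simp only [Finset.mem_filter, Finset.mem_univ, true_and]; exact hgm⟩
    calc (B S m).card ≤ (S.biUnion (fun m' =>
          Finset.univ.filter (fun g : Fin N → (Fin ℓ → Bool) => g m = g m'))).card :=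
          Finset.card_le_card hsub
      _ ≤ ∑ m' ∈ S, (Finset.univ.filter
          (fun g : Fin N → (Fin ℓ → Bool) => g m = g m')).card := Finset.card_biUnion_le
      _ ≤ ∑ _m' ∈ S, 2 ^ (ℓ * (N - 1)) := by
          refine Finset.sum_le_sum (fun m' hm' => ?_)
          exact iso_pair_count ℓ N m m' (fun e => hmS (e ▸ hm'))
      _ = S.card * 2 ^ (ℓ * (N - 1)) := by rw [Finset.sum_const, smul_eq_mul]
      _ ≤ k * 2 ^ (ℓ * (N - 1)) := Nat.mul_le_mul_right _ hScard
      _ = 2 ^ (ℓ - 1 + ℓ * (N - 1)) := by rw [hk, pow_add]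
      _ = 2 ^ (ℓ * N - 1) := by
          congr 1
          have h1 : ℓ * (N - 1) = ℓ * N - ℓ := by rw [Nat.mul_sub, Nat.mul_one]
          have h2 : ℓ ≤ ℓ * N := Nat.le_mul_of_pos_right ℓ (by omega)
          omega
  -- union bound
  have hcard1 : (Finset.univ : Finset (Fin M → Fin N → (Fin ℓ → Bool))).card
      = 2 ^ (ℓ * N * M) := by
    rw [Finset.card_univ]
    simp only [Fintype.card_fun, Fintype.card_bool, Fintype.card_fin]
    rw [← pow_mul, ← pow_mul, Nat.mul_assoc]
  have hsum : (P.biUnion Bad).card ≤ P.card * 2 ^ ((ℓ * N - 1) * M) := by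
    calc (P.biUnion Bad).card ≤ ∑ p ∈ P, (Bad p).card := Finset.card_biUnion_le
      _ ≤ ∑ _p ∈ P, 2 ^ ((ℓ * N - 1) * M) := by
          refine Finset.sum_le_sum (fun p hp => ?_)
          rw [hP] at hp
          simp only [Finset.mem_filter, Finset.mem_univ, true_and] at hp
          obtain ⟨_, hpc, hpm⟩ := hp
          rw [hBad]
          rw [Fintype.card_piFinset]
          calc ∏ _j : Fin M, (B p.1 p.2).card = (B p.1 p.2).card ^ M := by
                rw [Finset.prod_const, Finset.card_univ, Fintype.card_fin]
            _ ≤ (2 ^ (ℓ * N - 1)) ^ M := Nat.pow_le_pow_left (hBcard p.1 p.2 hpc hpm) M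
            _ = 2 ^ ((ℓ * N - 1) * M) := by rw [← pow_mul]
      _ = P.card * 2 ^ ((ℓ * N - 1) * M) := by rw [Finset.sum_const, smul_eq_mul]
  have hPcard : P.card < 2 ^ M := by
    calc P.card < N ^ (k + 1) := iso_pairs_count N k hN
      _ ≤ 2 ^ M := by rw [hk, hMdef]; exact iso_numeric ℓ N hℓ hN
  have hfinal : 2 ^ (ℓ * N * M) < 2 ^ (ℓ * N * M) := by
    calc 2 ^ (ℓ * N * M) ≤ P.card * 2 ^ ((ℓ * N - 1) * M) := by
          rw [← hcard1]
          exact le_trans (Finset.card_le_card hcover) hsum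
      _ < 2 ^ M * 2 ^ ((ℓ * N - 1) * M) :=
          Nat.mul_lt_mul_of_lt_of_le hPcard (le_refl _) (Nat.pow_pos (by norm_num))
      _ = 2 ^ (M + (ℓ * N - 1) * M) := by rw [pow_add]
      _ = 2 ^ (ℓ * N * M) := by
          congr 1
          have h1 : (ℓ * N - 1) * M = ℓ * N * M - M := by rw [Nat.sub_mul, Nat.one_mul]
          have h2 : M ≤ ℓ * N * M := Nat.le_mul_of_pos_left M (by positivity)
          omega
  exact absurd hfinal (lt_irrefl _)
end

section
/- Let L : ℝ⁺ → ℝ⁺ be non-decreasing and set c = L(3) + 2. Fix an integer N ≥ 2 and a real Δ > 0. If there exist functions E : 𝒫([N]) × [N] → {0,1}* and D : 𝒫([N]) × {0,1}* → [N] such that D(Q, E(P,m)) = m for every Δ-close pair P, Q ∈ 𝒫([N]) and every m ∈ [N], and 𝔼_{m←P}[|E(P,m)|] ≤ L(H(P)) for every P ∈ 𝒫([N]), then there exist functions E' : 𝒫([N]) × [N] → {0,1}* and D' : 𝒫([N]) × {0,1}* → [N] such that D'(Q, E'(P,m)) = m for every Δ-close pair P, Q and every m ∈ [N], and 𝔼_{m←P}[|E'(P,m)|]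 ≤ c·(1 + H(P)) for every P ∈ 𝒫([N]). -/
open Real

/-- abs log-ratio characterization -/
lemma close_iff_aux (Δ a b : ℝ) (ha : 0 < a) (hb : 0 < b) :
    |Real.logb 2 (a / b)| ≤ Δ ↔ (a ≤ 2 ^ Δ * b ∧ b ≤ 2 ^ Δ * a) := by
  rw [abs_le]
  have h2 : (1:ℝ) < 2 := one_lt_two
  constructor
  · rintro ⟨h1, h2'⟩
    constructor
    · have := (Real.logb_le_iff_le_rpow h2 (div_pos ha hb)).1 h2'
      rw [div_le_iff₀ hb] at this
      linarith [this]
    · have hneg : Real.logb 2 (b / a) ≤ Δ := by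
        have : (b / a) = (a / b)⁻¹ := by field_simp
        rw [this, Real.logb_inv]; linarith
      have := (Real.logb_le_iff_le_rpow h2 (div_pos hb ha)).1 hneg
      rw [div_le_iff₀ ha] at this
      linarith [this]
  · rintro ⟨hu, hl⟩
    have hTpos : (0:ℝ) < 2 ^ Δ := Real.rpow_pos_of_pos (by norm_num) Δ
    constructor
    · have : (2:ℝ) ^ (-Δ) ≤ a / b := by
        rw [Real.rpow_neg (by norm_num)]
        rw [le_div_iff₀ hb, inv_mul_le_iff₀ hTpos]  -- hope
        linarith
      have := Real.logb_le_logb_of_le h2 (Real.rpow_pos_of_pos (by norm_num) (-Δ)) this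
      rwa [Real.logb_rpow (by norm_num) (by norm_num)] at this
    · have : a / b ≤ 2 ^ Δ := by
        rw [div_le_iff₀ hb]; exact hu
      have := (Real.logb_le_iff_le_rpow h2 (div_pos ha hb)).2 this
      exact this

lemma pdist_lt_one {N : ℕ} (hN : 2 ≤ N) (P : PDist N) (m : Fin N) : P.1 m < 1 := by
  have h0 : (0:ℕ) < N := by omega
  have h1 : (1:ℕ) < N := by omega
  set j : Fin N := if m = ⟨0, h0⟩ then ⟨1, h1⟩ else ⟨0, h0⟩ with hj
  have hjm : j ≠ m := by
    rcases eq_or_ne m ⟨0, h0⟩ with h | h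
    · rw [hj, if_pos h, h]
      intro hc
      exact absurd (congrArg Fin.val hc) (by norm_num)
    · rw [hj, if_neg h]
      exact fun hc => h hc.symm
  have := Finset.single_lt_sum hjm (Finset.mem_univ m) (Finset.mem_univ j)
    (P.2.1 j) (fun k _ _ => (P.2.1 k).le)
  rw [P.2.2] at this
  exact this

lemma pdist_le_one {N : ℕ} (P : PDist N) (m : Fin N) : P.1 m ≤ 1 := by
  have := Finset.single_le_sum (f := P.1) (fun i _ => (P.2.1 i).le) (Finset.mem_univ m)
  rw [P.2.2] at this
  exact this

lemma entropy_nonneg' {N : ℕ} (P : PDist N) : 0 ≤ entropy P.1 := by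
  apply Finset.sum_nonneg
  intro m _
  have h1 : (1:ℝ) ≤ 1 / P.1 m := by
    rw [le_div_iff₀ (P.2.1 m)]; simpa using pdist_le_one P m
  have : 0 ≤ Real.logb 2 (1 / P.1 m) := by
    rcases eq_or_lt_of_le h1 with h | h
    · rw [← h]; simp
    · exact (Real.logb_pos one_lt_two h).le
  exact mul_nonneg (P.2.1 m).le this

lemma entropy_pos' {N : ℕ} (hN : 2 ≤ N) (P : PDist N) : 0 < entropy P.1 := by
  apply Finset.sum_pos
  · intro m _
    have := pdist_lt_one hN P m
    have h1 : (1:ℝ) < 1 / P.1 m := by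
      rw [lt_div_iff₀ (P.2.1 m)]; simpa using this
    exact mul_pos (P.2.1 m) (Real.logb_pos one_lt_two h1)
  · exact Finset.univ_nonempty_iff.2 (Fin.pos_iff_nonempty.1 (by omega))

/-- subadditivity of x ↦ x log(1/x) -/
lemma flog_subadd (a b : ℝ) (ha : 0 ≤ a) (hb : 0 ≤ b) :
    (a + b) * Real.logb 2 (1/(a+b)) ≤ a * Real.logb 2 (1/a) + b * Real.logb 2 (1/b) := by
  rcases eq_or_lt_of_le ha with h | ha
  · simp [← h]
  rcases eq_or_lt_of_le hb with h | hb
  · simp [← h]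
  have hab : 0 < a + b := by linarith
  have key : ∀ x : ℝ, 0 < x → x ≤ a + b →
      x * Real.logb 2 (1/(a+b)) ≤ x * Real.logb 2 (1/x) := by
    intro x hx hxab
    apply mul_le_mul_of_nonneg_left _ hx.le
    apply Real.logb_le_logb_of_le one_lt_two (by positivity)
    apply one_div_le_one_div_of_le hx hxab
  have h1 := key a ha (by linarith)
  have h2 := key b hb (by linarith)
  nlinarith [h1, h2]

/-- binary entropy at most 1 -/
lemma hbeta_le_one (β : ℝ) (h0 : 0 < β) (h1 : β < 1) :
    β * Real.logb 2 (1/β) + (1-β) * Real.logb 2 (1/(1-β)) ≤ 1 := by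
  have hl2 : 0 < Real.log 2 := Real.log_pos one_lt_two
  have hβ' : 0 < 1 - β := by linarith
  have k1 : Real.log (1/(2*β)) ≤ 1/(2*β) - 1 := Real.log_le_sub_one_of_pos (by positivity)
  have k2 : Real.log (1/(2*(1-β))) ≤ 1/(2*(1-β)) - 1 := Real.log_le_sub_one_of_pos (by positivity)
  have e1 : Real.log (1/β) = Real.log (1/(2*β)) + Real.log 2 := by
    rw [← Real.log_mul (by positivity) (by norm_num)]
    congr 1; field_simp
  have e2 : Real.log (1/(1-β)) = Real.log (1/(2*(1-β))) + Real.log 2 := by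
    rw [← Real.log_mul (by positivity) (by norm_num)]
    congr 1; field_simp
  have key : β * Real.log (1/β) + (1-β) * Real.log (1/(1-β)) ≤ Real.log 2 := by
    rw [e1, e2]
    have b1 : β * Real.log (1/(2*β)) ≤ 1/2 - β := by
      have := mul_le_mul_of_nonneg_left k1 h0.le
      calc β * Real.log (1/(2*β)) ≤ β * (1/(2*β) - 1) := this
        _ = 1/2 - β := by field_simp
    have b2 : (1-β) * Real.log (1/(2*(1-β))) ≤ 1/2 - (1-β) := by
      have := mul_le_mul_of_nonneg_left k2 hβ'.le
      calc (1-β) * Real.log (1/(2*(1-β))) ≤ (1-β) * (1/(2*(1-β)) - 1) := this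
        _ = 1/2 - (1-β) := by field_simp
    nlinarith
  have eq : β * Real.logb 2 (1/β) + (1-β) * Real.logb 2 (1/(1-β))
      = (β * Real.log (1/β) + (1-β) * Real.log (1/(1-β))) / Real.log 2 := by
    rw [Real.logb, Real.logb]; ring
  rw [eq, div_le_one hl2]
  exact key

lemma logb_le_twice (x : ℝ) (hx : 1 ≤ x) : Real.logb 2 x ≤ 2 * (x - 1) := by
  have hl2 : (1:ℝ)/2 < Real.log 2 := by
    have := Real.log_two_gt_d9; linarith
  have h := Real.log_le_sub_one_of_pos (show (0:ℝ) < x by linarith)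
  rw [Real.logb, div_le_iff₀ (by linarith : (0:ℝ) < Real.log 2)]
  nlinarith [h, sub_nonneg.2 hx]

noncomputable def Rd (N : ℕ) : Fin N → ℝ :=
  fun i => ((N:ℝ))⁻¹^8 + if (i:ℕ) = 0 then 1 - N * ((N:ℝ))⁻¹^8 else 0

section Rd
variable {N : ℕ} (hN : 2 ≤ N)
include hN

lemma xfacts : (2:ℝ) ≤ (N:ℝ) := by exact_mod_cast hN

lemma u_pos : 0 < ((N:ℝ))⁻¹^8 := by
  have : (0:ℝ) < N := by have := xfacts hN; linarith
  positivity

lemma Nu_le : (N:ℝ) * ((N:ℝ))⁻¹^8 ≤ 1/128 := by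
  have hx := xfacts hN
  have hx0 : (0:ℝ) < N := by linarith
  have hinv : ((N:ℝ))⁻¹ ≤ 1/2 := by
    rw [inv_le_comm₀ hx0 (by norm_num)]; linarith
  have hinv0 : (0:ℝ) ≤ ((N:ℝ))⁻¹ := by positivity
  have h7 : ((N:ℝ))⁻¹^7 ≤ (1/2:ℝ)^7 := by
    exact pow_le_pow_left₀ hinv0 hinv 7
  have : (N:ℝ) * ((N:ℝ))⁻¹^8 = ((N:ℝ))⁻¹^7 := by
    field_simp
  rw [this]
  calc ((N:ℝ))⁻¹^7 ≤ (1/2:ℝ)^7 := h7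
    _ ≤ 1/128 := by norm_num

lemma Rd_pos : ∀ i, 0 < Rd N i := by
  intro i
  unfold Rd
  rcases eq_or_ne (i:ℕ) 0 with h | h
  · rw [if_pos h]
    have := Nu_le hN
    have := u_pos hN
    linarith
  · rw [if_neg h]
    have := u_pos hN
    linarith

lemma Rd_sum : ∑ i, Rd N i = 1 := by
  have h0 : 0 < N := by omega
  unfold Rd
  rw [Finset.sum_add_distrib]
  have h1 : ∑ _i : Fin N, ((N:ℝ))⁻¹^8 = N * ((N:ℝ))⁻¹^8 := by
    rw [Finset.sum_const, Finset.card_univ, Fintype.card_fin, nsmul_eq_mul]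
  have h2 : ∑ i : Fin N, (if (i:ℕ) = 0 then 1 - (N:ℝ) * ((N:ℝ))⁻¹^8 else 0)
      = 1 - (N:ℝ) * ((N:ℝ))⁻¹^8 := by
    rw [Finset.sum_eq_single (⟨0, h0⟩ : Fin N)]
    · simp
    · intro b _ hb
      rw [if_neg]
      intro hc
      exact hb (Fin.ext hc)
    · intro h; exact absurd (Finset.mem_univ _) h
  rw [h1, h2]; ring

lemma Rd_isDist : IsDist (Rd N) := ⟨Rd_pos hN, Rd_sum hN⟩

lemma Rd_entropy_le : entropy (Rd N) ≤ 1/2 := by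
  classical
  have h0 : 0 < N := by omega
  have hx := xfacts hN
  set u : ℝ := ((N:ℝ))⁻¹^8 with hu
  have hu0 : 0 < u := u_pos hN
  have hNu : (N:ℝ) * u ≤ 1/128 := Nu_le hN
  set i₀ : Fin N := ⟨0, h0⟩ with hi₀
  set δ : ℝ := ((N:ℝ) - 1) * u with hδ
  have hδ0 : 0 ≤ δ := by
    apply mul_nonneg _ hu0.le; linarith
  have hδle : δ ≤ 1/128 := by
    have : δ ≤ (N:ℝ) * u := by
      apply mul_le_mul_of_nonneg_right _ hu0.le; linarith
    linarith
  have hR0 : Rd N i₀ = 1 - δ := by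
    unfold Rd; rw [if_pos (by simp [hi₀])]; rw [hδ]; ring
  have hRi : ∀ i : Fin N, i ≠ i₀ → Rd N i = u := by
    intro i hi
    unfold Rd
    rw [if_neg, add_zero]
    intro hc
    exact hi (Fin.ext (by simpa [hi₀] using hc))
  unfold entropy
  rw [← Finset.sum_erase_add _ _ (Finset.mem_univ i₀)]
  have hsum1 : ∑ i ∈ Finset.univ.erase i₀, Rd N i * Real.logb 2 (1 / Rd N i)
      = ((N:ℝ) - 1) * (u * Real.logb 2 (1/u)) := by
    rw [Finset.sum_congr rfl (fun i hi => by
      rw [hRi i (Finset.ne_of_mem_erase hi)])]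
    rw [Finset.sum_const, nsmul_eq_mul]
    congr 1
    rw [Finset.card_erase_of_mem (Finset.mem_univ _), Finset.card_univ, Fintype.card_fin]
    push_cast [Nat.cast_sub (by omega : 1 ≤ N)]
    ring_nf
  rw [hsum1, hR0]
  have hA : ((N:ℝ) - 1) * (u * Real.logb 2 (1/u)) ≤ 1/4 := by
    have h1u : 1/u = ((N:ℝ))^8 := by
      rw [hu, one_div, ← inv_pow, inv_inv]
    have hlog : Real.logb 2 (1/u) = 8 * Real.logb 2 (N:ℝ) := by
      rw [h1u, Real.logb_pow]; norm_num
    have hlx : Real.logb 2 (N:ℝ) ≤ 2 * (N:ℝ) := by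
      have := logb_le_twice (N:ℝ) (by linarith)
      linarith
    have hlx0 : 0 ≤ Real.logb 2 (N:ℝ) := by
      apply Real.logb_nonneg one_lt_two; linarith
    have hx6 : ((N:ℝ))⁻¹^6 ≤ (1/2:ℝ)^6 := by
      apply pow_le_pow_left₀ (by positivity)
      rw [inv_le_comm₀ (by linarith) (by norm_num)]; linarith
    have hxu : ((N:ℝ))^2 * u = ((N:ℝ))⁻¹^6 := by
      rw [hu]; field_simp
    calc ((N:ℝ) - 1) * (u * Real.logb 2 (1/u))
        ≤ (N:ℝ) * (u * (8 * (2 * (N:ℝ)))) := by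
          rw [hlog]
          apply mul_le_mul (by linarith) _ (by positivity) (by linarith)
          apply mul_le_mul_of_nonneg_left _ hu0.le
          nlinarith
      _ = 16 * (((N:ℝ))^2 * u) := by ring
      _ = 16 * ((N:ℝ))⁻¹^6 := by rw [hxu]
      _ ≤ 16 * (1/2:ℝ)^6 := by linarith
      _ ≤ 1/4 := by norm_num
  have hB : (1 - δ) * Real.logb 2 (1/(1-δ)) ≤ 4 * δ := by
    have h1δ : (1:ℝ)/2 ≤ 1 - δ := by linarith
    have hinv1 : (1:ℝ) ≤ 1/(1-δ) := by
      rw [le_div_iff₀ (by linarith)]; linarith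
    have hlog : Real.logb 2 (1/(1-δ)) ≤ 2 * (1/(1-δ) - 1) := logb_le_twice _ hinv1
    have hratio : 1/(1-δ) - 1 = δ/(1-δ) := by field_simp; ring
    have hδδ : δ/(1-δ) ≤ 2*δ := by
      rw [div_le_iff₀ (by linarith)]; nlinarith
    have hlog0 : 0 ≤ Real.logb 2 (1/(1-δ)) := by
      apply Real.logb_nonneg one_lt_two hinv1
    calc (1 - δ) * Real.logb 2 (1/(1-δ)) ≤ 1 * Real.logb 2 (1/(1-δ)) := by
          apply mul_le_mul_of_nonneg_right (by linarith) hlog0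
      _ = Real.logb 2 (1/(1-δ)) := one_mul _
      _ ≤ 2 * (δ/(1-δ)) := by rw [← hratio]; linarith
      _ ≤ 4 * δ := by linarith
  linarith

end Rd

lemma sum_f_smul {N : ℕ} (c : ℝ) (hc : 0 < c) (P : PDist N) :
    ∑ m, (c * P.1 m) * Real.logb 2 (1/(c * P.1 m))
      = c * Real.logb 2 (1/c) + c * entropy P.1 := by
  have key : ∀ m : Fin N, (c * P.1 m) * Real.logb 2 (1/(c * P.1 m))
      = c * Real.logb 2 (1/c) * P.1 m + c * (P.1 m * Real.logb 2 (1/P.1 m)) := by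
    intro m
    have hp := P.2.1 m
    have h1 : 1/(c * P.1 m) = (1/c) * (1/P.1 m) := by field_simp
    rw [h1, Real.logb_mul (by positivity) (by positivity)]
    ring
  rw [Finset.sum_congr rfl (fun m _ => key m), Finset.sum_add_distrib]
  rw [← Finset.mul_sum, ← Finset.mul_sum, P.2.2]
  unfold entropy
  ring

noncomputable def mixF (N : ℕ) (k : ℕ) (P : Fin N → ℝ) : Fin N → ℝ :=
  fun m => (2/3:ℝ)^k * P m + (1 - (2/3:ℝ)^k) * Rd N m

section Mix
variable {N : ℕ} (hN : 2 ≤ N)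
include hN

lemma beta_pos (k : ℕ) : (0:ℝ) < (2/3:ℝ)^k := by positivity
lemma beta_le_one (k : ℕ) : (2/3:ℝ)^k ≤ 1 := by
  apply pow_le_one₀ <;> norm_num

lemma mix_isDist (k : ℕ) (P : PDist N) : IsDist (mixF N k P.1) := by
  constructor
  · intro m
    have h1 : 0 < (2/3:ℝ)^k * P.1 m := mul_pos (beta_pos hN k) (P.2.1 m)
    have h2 : 0 ≤ (1 - (2/3:ℝ)^k) * Rd N m :=
      mul_nonneg (by linarith [beta_le_one hN k]) (Rd_pos hN m).le
    unfold mixF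
    linarith
  · unfold mixF
    rw [Finset.sum_add_distrib, ← Finset.mul_sum, ← Finset.mul_sum, P.2.2, Rd_sum hN]
    ring

noncomputable def mixP (k : ℕ) (P : PDist N) : PDist N := ⟨mixF N k P.1, mix_isDist hN k P⟩

lemma mixP_ge (k : ℕ) (P : PDist N) (m : Fin N) :
    (2/3:ℝ)^k * P.1 m ≤ (mixP hN k P).1 m := by
  have h2 : 0 ≤ (1 - (2/3:ℝ)^k) * Rd N m :=
    mul_nonneg (by linarith [beta_le_one hN k]) (Rd_pos hN m).le
  show (2/3:ℝ)^k * P.1 m ≤ (2/3:ℝ)^k * P.1 m + (1 - (2/3:ℝ)^k) * Rd N m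
  linarith

lemma close_mix (Δ : ℝ) (hΔ : 0 < Δ) (P Q : PDist N) (h : Close Δ P Q) (k : ℕ) :
    Close Δ (mixP hN k P) (mixP hN k Q) := by
  intro m
  have hp := P.2.1 m
  have hq := Q.2.1 m
  have hr := Rd_pos hN m
  have hβ0 := beta_pos hN k
  have hβ1 := beta_le_one hN k
  have hT1 : (1:ℝ) ≤ 2 ^ Δ := Real.one_le_rpow one_le_two hΔ.le
  obtain ⟨h1, h2⟩ := (close_iff_aux Δ (P.1 m) (Q.1 m) hp hq).1 (h m)
  have hmp : 0 < (mixP hN k P).1 m := ((mixP hN k P).2.1 m)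
  have hmq : 0 < (mixP hN k Q).1 m := ((mixP hN k Q).2.1 m)
  apply (close_iff_aux Δ _ _ hmp hmq).2
  constructor
  · show (2/3:ℝ)^k * P.1 m + (1 - (2/3:ℝ)^k) * Rd N m
      ≤ 2^Δ * ((2/3:ℝ)^k * Q.1 m + (1 - (2/3:ℝ)^k) * Rd N m)
    nlinarith [mul_nonneg (mul_nonneg (sub_nonneg.2 hT1) (by linarith : (0:ℝ) ≤ 1 - (2/3:ℝ)^k)) hr.le,
      mul_le_mul_of_nonneg_left h1 hβ0.le]
  · show (2/3:ℝ)^k * Q.1 m + (1 - (2/3:ℝ)^k) * Rd N m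
      ≤ 2^Δ * ((2/3:ℝ)^k * P.1 m + (1 - (2/3:ℝ)^k) * Rd N m)
    nlinarith [mul_nonneg (mul_nonneg (sub_nonneg.2 hT1) (by linarith : (0:ℝ) ≤ 1 - (2/3:ℝ)^k)) hr.le,
      mul_le_mul_of_nonneg_left h2 hβ0.le]

lemma entropy_mix_le (k : ℕ) (P : PDist N)
    (hβH : (2/3:ℝ)^k * entropy P.1 ≤ 3/2) :
    entropy (mixP hN k P).1 ≤ 3 := by
  classical
  set β : ℝ := (2/3:ℝ)^k with hβ
  have hβ0 : 0 < β := beta_pos hN k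
  have hβ1 : β ≤ 1 := beta_le_one hN k
  have step1 : entropy (mixP hN k P).1 ≤
      (∑ m, (β * P.1 m) * Real.logb 2 (1/(β * P.1 m)))
      + ∑ m, ((1-β) * Rd N m) * Real.logb 2 (1/((1-β) * Rd N m)) := by
    unfold entropy
    rw [← Finset.sum_add_distrib]
    apply Finset.sum_le_sum
    intro m _
    exact flog_subadd _ _ (mul_pos hβ0 (P.2.1 m)).le
      (mul_nonneg (by linarith) (Rd_pos hN m).le)
  have e1 : ∑ m, (β * P.1 m) * Real.logb 2 (1/(β * P.1 m))
      = β * Real.logb 2 (1/β) + β * entropy P.1 := sum_f_smul β hβ0 P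
  rcases eq_or_lt_of_le hβ1 with hb1 | hb1
  · -- β = 1
    have e2 : ∑ m, ((1-β) * Rd N m) * Real.logb 2 (1/((1-β) * Rd N m)) = 0 := by
      apply Finset.sum_eq_zero
      intro m _
      rw [hb1]
      simp
    rw [e1, e2, hb1] at step1
    simp at step1
    rw [hb1] at hβH
    simp at hβH
    linarith
  · -- β < 1
    have RdP : PDist N := ⟨Rd N, Rd_isDist hN⟩
    have e2 : ∑ m, ((1-β) * Rd N m) * Real.logb 2 (1/((1-β) * Rd N m))
        = (1-β) * Real.logb 2 (1/(1-β)) + (1-β) * entropy (Rd N) :=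
      sum_f_smul (1-β) (by linarith) ⟨Rd N, Rd_isDist hN⟩
    have hRd0 : 0 ≤ entropy (Rd N) := entropy_nonneg' ⟨Rd N, Rd_isDist hN⟩
    have hRdhalf : entropy (Rd N) ≤ 1/2 := Rd_entropy_le hN
    have hbb : β * Real.logb 2 (1/β) + (1-β) * Real.logb 2 (1/(1-β)) ≤ 1 :=
      hbeta_le_one β hβ0 hb1
    have h4 : (1-β) * entropy (Rd N) ≤ 1/2 := by
      calc (1-β) * entropy (Rd N) ≤ 1 * entropy (Rd N) := by
            apply mul_le_mul_of_nonneg_right (by linarith) hRd0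
        _ ≤ 1/2 := by linarith
    rw [e1, e2] at step1
    linarith

end Mix

noncomputable def kOf (H : ℝ) : ℕ := sInf {k : ℕ | 1 + H < (3/2:ℝ)^(k+1)}

lemma kOf_nonempty (H : ℝ) : {k : ℕ | 1 + H < (3/2:ℝ)^(k+1)}.Nonempty := by
  obtain ⟨n, hn⟩ := pow_unbounded_of_one_lt (1 + H) (by norm_num : (1:ℝ) < 3/2)
  exact ⟨n, lt_of_lt_of_le hn (pow_le_pow_right₀ (by norm_num) (by omega))⟩

lemma kOf_upper (H : ℝ) : 1 + H < (3/2:ℝ)^(kOf H + 1) :=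
  Nat.sInf_mem (kOf_nonempty H)

lemma kOf_lower (H : ℝ) (hH : 0 ≤ H) : (3/2:ℝ)^(kOf H) ≤ 1 + H := by
  rcases Nat.eq_zero_or_pos (kOf H) with h | h
  · rw [h]; simpa using hH
  · have hmem := Nat.notMem_of_lt_sInf (show kOf H - 1 < sInf {k : ℕ | 1 + H < (3/2:ℝ)^(k+1)} by
      unfold kOf at h ⊢; omega)
    simp only [Set.mem_setOf_eq, not_lt] at hmem
    have : kOf H - 1 + 1 = kOf H := by omega
    rwa [this] at hmem

lemma succ_le_two_pow (k : ℕ) : (k:ℝ) + 1 ≤ 2 * (3/2:ℝ)^k := by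
  induction k with
  | zero => norm_num
  | succ n ih =>
    have h1 : (1:ℝ) ≤ (3/2:ℝ)^n := one_le_pow₀ (by norm_num)
    push_cast
    calc (n:ℝ) + 1 + 1 ≤ 2 * (3/2:ℝ)^n + (3/2:ℝ)^n := by linarith
      _ = 2 * (3/2:ℝ)^(n+1) := by ring

lemma takeWhile_rep (k : ℕ) (t : List Bool) :
    ((List.replicate k true ++ false :: t).takeWhile (fun b => b)).length = k := by
  induction k with
  | zero => simp [List.takeWhile]
  | succ n ih =>
    rw [List.replicate_succ, List.cons_append, List.takeWhile_cons]
    simpa using ih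

lemma drop_rep (k : ℕ) (t : List Bool) :
    (List.replicate k true ++ false :: t).drop (k + 1) = t := by
  have h : (List.replicate k true ++ false :: t).drop (List.replicate k true).length
      = false :: t := List.drop_left
  rw [List.length_replicate] at h
  calc (List.replicate k true ++ false :: t).drop (k + 1)
      = ((List.replicate k true ++ false :: t).drop k).drop 1 := by
        rw [List.drop_drop]
    _ = (false :: t).drop 1 := by rw [h]
    _ = t := rfl

/-- Let `L : ℝ⁺ → ℝ⁺` be non-decreasing and `c = L(3) + 2`.
Fix `N ≥ 2` and `Δ > 0`.  If there is a zero-error uncertain compression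
scheme `(E, D)` for distance `Δ` over `[N]` with expected encoding length at
most `L(H(P))` on each `P`, then there is one `(E', D')` with expected
encoding length at most `c·(1 + H(P))` on each `P`. -/
theorem linear_entropy_dependence (L : ℝ → ℝ)
    (hLpos : ∀ x : ℝ, 0 < x → 0 < L x)
    (hLmono : ∀ x y : ℝ, 0 < x → x ≤ y → L x ≤ L y)
    (N : ℕ) (hN : 2 ≤ N) (Δ : ℝ) (hΔ : 0 < Δ)
    (E : PDist N → Fin N → Str) (D : PDist N → Str → Fin N)
    (hED : ∀ P Q : PDist N, Close Δ P Q → ∀ m : Fin N, D Q (E P m) = m)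
    (hperf : ∀ P : PDist N,
      ∑ m, P.1 m * ((E P m).length : ℝ) ≤ L (entropy P.1)) :
    ∃ (E' : PDist N → Fin N → Str) (D' : PDist N → Str → Fin N),
      (∀ P Q : PDist N, Close Δ P Q → ∀ m : Fin N, D' Q (E' P m) = m) ∧
      (∀ P : PDist N, ∑ m, P.1 m * ((E' P m).length : ℝ) ≤
        (L 3 + 2) * (1 + entropy P.1)) := by
  classical
  refine ⟨fun P m =>
      List.replicate (kOf (entropy P.1)) true ++
        false :: E (mixP hN (kOf (entropy P.1)) P) m,
    fun Q s =>
      D (mixP hN ((s.takeWhile (fun b => b)).length) Q)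
        (s.drop ((s.takeWhile (fun b => b)).length + 1)), ?_, ?_⟩
  · intro P Q hPQ m
    set k := kOf (entropy P.1) with hk
    have h1 := takeWhile_rep k (E (mixP hN k P) m)
    have h2 := drop_rep k (E (mixP hN k P) m)
    simp only [hk] at h1 h2; simp only [h1, h2]
    exact hED _ _ (close_mix hN Δ hΔ P Q hPQ k) m
  · intro P
    set H : ℝ := entropy P.1 with hH
    set k := kOf H with hk
    set M := mixP hN k P with hM
    have hHpos : 0 < H := entropy_pos' hN P
    have hkl : (3/2:ℝ)^k ≤ 1 + H := kOf_lower H hHpos.le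
    have hku : 1 + H < (3/2:ℝ)^(k+1) := kOf_upper H
    have hprod : (2/3:ℝ)^k * (3/2:ℝ)^k = 1 := by
      rw [← mul_pow]; norm_num
    have hβ0 : (0:ℝ) < (2/3:ℝ)^k := by positivity
    have h32 : (0:ℝ) < (3/2:ℝ)^k := by positivity
    have hβH : (2/3:ℝ)^k * H ≤ 3/2 := by
      have : (2/3:ℝ)^k * (1 + H) ≤ (2/3:ℝ)^k * (3/2:ℝ)^(k+1) :=
        mul_le_mul_of_nonneg_left hku.le hβ0.le
      have e : (2/3:ℝ)^k * (3/2:ℝ)^(k+1) = 3/2 := by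
        rw [pow_succ]
        calc (2/3:ℝ)^k * ((3/2:ℝ)^k * (3/2)) = ((2/3:ℝ)^k * (3/2:ℝ)^k) * (3/2) := by ring
          _ = 3/2 := by rw [hprod]; ring
      nlinarith
    have hent : entropy M.1 ≤ 3 := entropy_mix_le hN k P hβH
    have hEpos : 0 < entropy M.1 := entropy_pos' hN M
    have hL3 : L (entropy M.1) ≤ L 3 := hLmono _ _ hEpos hent
    have hL3pos : 0 < L 3 := hLpos 3 (by norm_num)
    have hS : ∑ m, P.1 m * ((E M m).length : ℝ) ≤ (3/2:ℝ)^k * L 3 := by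
      have step : ∑ m, P.1 m * ((E M m).length : ℝ)
          ≤ ∑ m, (3/2:ℝ)^k * (M.1 m * ((E M m).length : ℝ)) := by
        apply Finset.sum_le_sum
        intro m _
        have hge : (2/3:ℝ)^k * P.1 m ≤ M.1 m := mixP_ge hN k P m
        have hlen : (0:ℝ) ≤ ((E M m).length : ℝ) := by positivity
        have hP32 : P.1 m ≤ (3/2:ℝ)^k * M.1 m := by
          have := mul_le_mul_of_nonneg_left hge h32.le
          calc P.1 m = (3/2:ℝ)^k * ((2/3:ℝ)^k * P.1 m) := by
                rw [show (3/2:ℝ)^k * ((2/3:ℝ)^k * P.1 m) = ((2/3:ℝ)^k * (3/2:ℝ)^k) * P.1 m by ring,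
                  hprod, one_mul]
            _ ≤ (3/2:ℝ)^k * M.1 m := this
        calc P.1 m * ((E M m).length : ℝ) ≤ ((3/2:ℝ)^k * M.1 m) * ((E M m).length : ℝ) :=
              mul_le_mul_of_nonneg_right hP32 hlen
          _ = (3/2:ℝ)^k * (M.1 m * ((E M m).length : ℝ)) := by ring
      calc ∑ m, P.1 m * ((E M m).length : ℝ)
          ≤ ∑ m, (3/2:ℝ)^k * (M.1 m * ((E M m).length : ℝ)) := step
        _ = (3/2:ℝ)^k * ∑ m, M.1 m * ((E M m).length : ℝ) := by rw [Finset.mul_sum]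
        _ ≤ (3/2:ℝ)^k * L (entropy M.1) :=
            mul_le_mul_of_nonneg_left (hperf M) h32.le
        _ ≤ (3/2:ℝ)^k * L 3 := mul_le_mul_of_nonneg_left hL3 h32.le
    have hlen : ∀ m : Fin N,
        (((List.replicate k true ++ false :: E M m) : Str).length : ℝ)
          = ((k:ℝ) + 1) + ((E M m).length : ℝ) := by
      intro m
      rw [List.length_append, List.length_replicate, List.length_cons]
      push_cast
      ring
    have hsplit : ∑ m, P.1 m * (((List.replicate k true ++ false :: E M m) : Str).length : ℝ)
        = ((k:ℝ) + 1) + ∑ m, P.1 m * ((E M m).length : ℝ) := by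
      rw [Finset.sum_congr rfl (fun m _ => by rw [hlen m, mul_add])]
      rw [Finset.sum_add_distrib, ← Finset.sum_mul, P.2.2, one_mul]
    have hk1 : (k:ℝ) + 1 ≤ 2 * (3/2:ℝ)^k := succ_le_two_pow k
    calc ∑ m, P.1 m * (((List.replicate k true ++ false :: E M m) : Str).length : ℝ)
        = ((k:ℝ) + 1) + ∑ m, P.1 m * ((E M m).length : ℝ) := hsplit
      _ ≤ 2 * (3/2:ℝ)^k + (3/2:ℝ)^k * L 3 := by linarith
      _ ≤ 2 * (1 + H) + (1 + H) * L 3 := by nlinarith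
      _ = (L 3 + 2) * (1 + H) := by ring
end
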